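/- arXiv:2107.05428 — 9 statements merged into one kernel-verified Lean document; each statement's English description precedes it below -/
import Mathlib

section
/- Let μ₀ > 0 and Ω = ℂ \ ([−μ₀, μ₀] ∪ iℝ) (note Ω = −Ω), and let S ⊆ Ω be an unbounded set with S = −S. Fix an integer L ≥ 1 and let M denote the set of pairs m = (m₁, m₂) of holomorphic functions on Ω such that (i) there exist complex vectors m_k = (m_{k,1}, m_{k,2}), 1 ≤ k ≤ L−1, with m_j(z) = 1 + Σ_{k=1}^{L−1} m_{k,j} z^{−k} + O(z^{−L}) as z → ∞ in S (for j = 1, 2), and (ii) D_m(z) := m₁(z)m₂(−z) + m₁(−z)m₂(z) ≠ 0 for every z ∈ Ω. For m, n ∈ M define (m·n)(z) = (m₁(z)n_{1,e}(z) + m₂(z)n_{1,o}(z), m₁(z)n_{2,o}(z) + m₂(z)n_{2,e}(z)) and m̂(z) = (2(m_{2,e}(z) − m_{1,o}(z))/D_m(z), 2(m_{1,e}(z) − m_{2,o}(z))/D_m(z)). Then m·n ∈ M and m̂ ∈ M, and m·m̂ = m̂·m = (1, 1) identically on Ω. -/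
noncomputable section

open Finset Complex

def Complex.abs : AbsoluteValue ℂ ℝ := IsAbsoluteValue.toAbsoluteValue (norm : ℂ → ℝ)

def epoly (c : ℕ → ℂ) (L : ℕ) (z : ℂ) : ℂ := ∑ k ∈ Finset.range L, c k * z ^ (-(k : ℤ))

def IsExp (S : Set ℂ) (L : ℕ) (f : ℂ → ℂ) (c : ℕ → ℂ) : Prop :=
  ∃ B R : ℝ, ∀ z ∈ S, R ≤ Complex.abs z →
    Complex.abs (f z - epoly c L z) * Complex.abs z ^ L ≤ B

def conv (c d : ℕ → ℂ) (k : ℕ) : ℂ :=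
  PowerSeries.coeff k (PowerSeries.mk c * PowerSeries.mk d)

lemma conv_zero (c d : ℕ → ℂ) : conv c d 0 = c 0 * d 0 := by
  simp [conv, PowerSeries.coeff_mul, Finset.Nat.antidiagonal_zero]

lemma conv_eq (c d : ℕ → ℂ) (k : ℕ) :
    conv c d k = ∑ p ∈ Finset.HasAntidiagonal.antidiagonal k, c p.1 * d p.2 := by
  simp [conv, PowerSeries.coeff_mul]

lemma epoly_eq (c : ℕ → ℂ) {L : ℕ} (hL : 1 ≤ L) (z : ℂ) :
    epoly c L z = c 0 + ∑ k ∈ Finset.Icc 1 (L - 1), c k * z ^ (-(k : ℤ)) := by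
  have h1 : Finset.Icc 1 (L - 1) = Finset.Ico 1 L := by
    have h2 : L - 1 + 1 = L := by omega
    rw [← Finset.Ico_add_one_right_eq_Icc]; congr 1
  rw [epoly, Finset.range_eq_Ico, Finset.sum_eq_sum_Ico_succ_bot hL, h1]
  simp

lemma isExp_congr {S L f g c} (h : ∀ z ∈ S, f z = g z) (hf : IsExp S L f c) :
    IsExp S L g c := by
  obtain ⟨B, R, hB⟩ := hf
  exact ⟨B, R, fun z hz hR => by rw [← h z hz]; exact hB z hz hR⟩

lemma IsExp.add {S L f g c d} (hf : IsExp S L f c) (hg : IsExp S L g d) :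
    IsExp S L (fun z => f z + g z) (fun k => c k + d k) := by
  obtain ⟨B1, R1, h1⟩ := hf
  obtain ⟨B2, R2, h2⟩ := hg
  refine ⟨B1 + B2, max R1 R2, fun z hz hR => ?_⟩
  have e : epoly (fun k => c k + d k) L z = epoly c L z + epoly d L z := by
    simp [epoly, add_mul, Finset.sum_add_distrib]
  have : f z + g z - epoly (fun k => c k + d k) L z
      = (f z - epoly c L z) + (g z - epoly d L z) := by rw [e]; ring
  rw [this]
  calc Complex.abs _ * Complex.abs z ^ L
      ≤ (Complex.abs (f z - epoly c L z) + Complex.abs (g z - epoly d L z))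
        * Complex.abs z ^ L := by
        gcongr; exact AbsoluteValue.add_le _ _ _
    _ = Complex.abs (f z - epoly c L z) * Complex.abs z ^ L
        + Complex.abs (g z - epoly d L z) * Complex.abs z ^ L := by ring
    _ ≤ B1 + B2 := add_le_add (h1 z hz (le_trans (le_max_left _ _) hR))
        (h2 z hz (le_trans (le_max_right _ _) hR))

lemma IsExp.const_mul {S L f c} (a : ℂ) (hf : IsExp S L f c) :
    IsExp S L (fun z => a * f z) (fun k => a * c k) := by
  obtain ⟨B, R, h⟩ := hf
  refine ⟨Complex.abs a * B, R, fun z hz hR => ?_⟩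
  have e : epoly (fun k => a * c k) L z = a * epoly c L z := by
    simp [epoly, Finset.mul_sum, mul_assoc]
  have : a * f z - epoly (fun k => a * c k) L z = a * (f z - epoly c L z) := by
    rw [e]; ring
  rw [this, map_mul, mul_assoc]
  exact mul_le_mul_of_nonneg_left (h z hz hR) (AbsoluteValue.nonneg _ _)

lemma IsExp.negArg {S : Set ℂ} {L f c} (hSsym : ∀ z, z ∈ S → -z ∈ S)
    (hf : IsExp S L f c) :
    IsExp S L (fun z => f (-z)) (fun k => (-1) ^ k * c k) := by
  obtain ⟨B, R, h⟩ := hf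
  refine ⟨B, R, fun z hz hR => ?_⟩
  have e : epoly (fun k => (-1) ^ k * c k) L z = epoly c L (-z) := by
    refine Finset.sum_congr rfl fun k _ => ?_
    have hz : (-z : ℂ) ^ (-(k : ℤ)) = (-1 : ℂ) ^ (-(k : ℤ)) * z ^ (-(k : ℤ)) := by
      rw [← mul_zpow]; ring_nf
    have h1 : ((-1 : ℂ)) ^ (-(k : ℤ)) = (-1 : ℂ) ^ k := by
      rw [zpow_neg, zpow_natCast, ← inv_pow]
      norm_num
    rw [hz, h1]; ring
  rw [e]
  have := h (-z) (hSsym z hz) (by rwa [map_neg_eq_map])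
  rwa [map_neg_eq_map] at this
lemma epoly_bound {c : ℕ → ℂ} {L : ℕ} {z : ℂ} (hz : 1 ≤ Complex.abs z) :
    Complex.abs (epoly c L z) ≤ ∑ k ∈ Finset.range L, Complex.abs (c k) := by
  refine le_trans (Complex.abs.sum_le _ _) (Finset.sum_le_sum fun k _ => ?_)
  rw [map_mul, map_zpow₀]
  have h1 : Complex.abs z ^ (-(k : ℤ)) ≤ 1 :=
    zpow_le_one_of_nonpos₀ hz (by simp)
  nlinarith [AbsoluteValue.nonneg Complex.abs (c k)]

lemma epoly_mul_split {c d : ℕ → ℂ} {L : ℕ} {z : ℂ} (hz : z ≠ 0) :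
    epoly c L z * epoly d L z - epoly (conv c d) L z
      = ∑ p ∈ (Finset.range L ×ˢ Finset.range L).filter (fun p => ¬ p.1 + p.2 < L),
          c p.1 * d p.2 * z ^ (-((p.1 : ℤ) + (p.2 : ℤ))) := by
  have hterm : ∀ (i j : ℕ), c i * z ^ (-(i:ℤ)) * (d j * z ^ (-(j:ℤ)))
      = c i * d j * z ^ (-((i:ℤ) + (j:ℤ))) := by
    intro i j
    rw [neg_add, zpow_add₀ hz]
    ring
  have hsq : epoly c L z * epoly d L z
      = ∑ p ∈ Finset.range L ×ˢ Finset.range L,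
          c p.1 * d p.2 * z ^ (-((p.1 : ℤ) + (p.2 : ℤ))) := by
    rw [epoly, epoly, Finset.sum_mul_sum, ← Finset.sum_product']
    exact Finset.sum_congr rfl fun p _ => hterm p.1 p.2
  have hdisj : (Finset.range L : Set ℕ).PairwiseDisjoint
      (fun k => Finset.HasAntidiagonal.antidiagonal k) := by
    intro a _ b _ hab
    simp only [Function.onFun]
    rw [Finset.disjoint_left]
    intro p hp hp'
    exact hab ((Finset.HasAntidiagonal.mem_antidiagonal.mp hp).symm.trans
      (Finset.HasAntidiagonal.mem_antidiagonal.mp hp'))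
  have hconv : epoly (conv c d) L z
      = ∑ p ∈ (Finset.range L ×ˢ Finset.range L).filter (fun p => p.1 + p.2 < L),
          c p.1 * d p.2 * z ^ (-((p.1 : ℤ) + (p.2 : ℤ))) := by
    rw [epoly]
    have h1 : ∀ k ∈ Finset.range L, conv c d k * z ^ (-(k:ℤ))
        = ∑ p ∈ Finset.HasAntidiagonal.antidiagonal k, c p.1 * d p.2 * z ^ (-((p.1:ℤ) + (p.2:ℤ))) := by
      intro k _
      rw [conv_eq, Finset.sum_mul]
      refine Finset.sum_congr rfl fun p hp => ?_
      have hk := Finset.HasAntidiagonal.mem_antidiagonal.mp hp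
      subst hk
      push_cast
      ring
    rw [Finset.sum_congr rfl h1, ← Finset.sum_biUnion hdisj]
    congr 1
    ext p
    simp only [Finset.mem_biUnion, Finset.mem_range, Finset.HasAntidiagonal.mem_antidiagonal,
      Finset.mem_filter, Finset.mem_product]
    constructor
    · rintro ⟨k, hk, rfl⟩; omega
    · rintro ⟨⟨h1, h2⟩, h3⟩; exact ⟨p.1 + p.2, h3, rfl⟩
  rw [hsq, hconv,
    ← Finset.sum_filter_add_sum_filter_not (Finset.range L ×ˢ Finset.range L)
      (fun p => p.1 + p.2 < L)
      (fun p => c p.1 * d p.2 * z ^ (-((p.1 : ℤ) + (p.2 : ℤ))))]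
  ring
lemma IsExp.err_le {S : Set ℂ} {L : ℕ} {f : ℂ → ℂ} {c : ℕ → ℂ} {B R : ℝ} (h : ∀ z ∈ S, R ≤ Complex.abs z →
      Complex.abs (f z - epoly c L z) * Complex.abs z ^ L ≤ B)
    {z : ℂ} (hz : z ∈ S) (hR : R ≤ Complex.abs z) (h1 : 1 ≤ Complex.abs z) :
    Complex.abs (f z - epoly c L z) ≤ max B 0 := by
  have hp : (1:ℝ) ≤ Complex.abs z ^ L := one_le_pow₀ h1
  have hB := h z hz hR
  have h0 : (0:ℝ) ≤ Complex.abs (f z - epoly c L z) := AbsoluteValue.nonneg _ _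
  nlinarith [le_max_left B (0:ℝ)]

lemma IsExp.bounded {S L f c} (hf : IsExp S L f c) :
    ∃ C R : ℝ, 0 ≤ C ∧ ∀ z ∈ S, R ≤ Complex.abs z → Complex.abs (f z) ≤ C := by
  obtain ⟨B, R, h⟩ := hf
  refine ⟨(∑ k ∈ Finset.range L, Complex.abs (c k)) + max B 0, max R 1,
    by positivity, fun z hz hR => ?_⟩
  have h1 : 1 ≤ Complex.abs z := le_trans (le_max_right _ _) hR
  have hRz : R ≤ Complex.abs z := le_trans (le_max_left _ _) hR
  calc Complex.abs (f z) = Complex.abs (epoly c L z + (f z - epoly c L z)) := by ring_nf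
    _ ≤ Complex.abs (epoly c L z) + Complex.abs (f z - epoly c L z) := Complex.abs.add_le _ _
    _ ≤ _ := add_le_add (epoly_bound h1) (IsExp.err_le h hz hRz h1)

lemma IsExp.mul {S : Set ℂ} {L : ℕ} {f g : ℂ → ℂ} {c d : ℕ → ℂ}
    (hf : IsExp S L f c) (hg : IsExp S L g d) :
    IsExp S L (fun z => f z * g z) (conv c d) := by
  obtain ⟨C2, R3, hC2pos, hC2⟩ := hg.bounded
  obtain ⟨B1, R1, h1⟩ := hf
  obtain ⟨B2, R2, h2⟩ := hg
  set Sc := ∑ k ∈ Finset.range L, Complex.abs (c k) with hSc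
  set Sd := ∑ k ∈ Finset.range L, Complex.abs (d k) with hSd
  have hScpos : 0 ≤ Sc := Finset.sum_nonneg fun _ _ => AbsoluteValue.nonneg _ _
  have hSdpos : 0 ≤ Sd := Finset.sum_nonneg fun _ _ => AbsoluteValue.nonneg _ _
  refine ⟨max B1 0 * C2 + Sc * max B2 0 + Sc * Sd,
    max (max R1 R2) (max R3 1), fun z hz hR => ?_⟩
  have hz1 : 1 ≤ Complex.abs z := le_trans (le_trans (le_max_right _ _) (le_max_right _ _)) hR
  have hz0 : z ≠ 0 := by
    intro h; rw [h] at hz1; simp at hz1; linarith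
  have hza : Complex.abs z ≠ 0 := by positivity
  have hR1 : R1 ≤ Complex.abs z := le_trans (le_trans (le_max_left _ _) (le_max_left _ _)) hR
  have hR2 : R2 ≤ Complex.abs z := le_trans (le_trans (le_max_right _ _) (le_max_left _ _)) hR
  have hR3 : R3 ≤ Complex.abs z := le_trans (le_trans (le_max_left _ _) (le_max_right _ _)) hR
  have hp : (1:ℝ) ≤ Complex.abs z ^ L := one_le_pow₀ hz1
  have hdecomp : f z * g z - epoly (conv c d) L z
      = (f z - epoly c L z) * g z + epoly c L z * (g z - epoly d L z)
        + (epoly c L z * epoly d L z - epoly (conv c d) L z) := by ring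
  have habs : Complex.abs (f z * g z - epoly (conv c d) L z) * Complex.abs z ^ L
      ≤ Complex.abs ((f z - epoly c L z) * g z) * Complex.abs z ^ L
        + Complex.abs (epoly c L z * (g z - epoly d L z)) * Complex.abs z ^ L
        + Complex.abs (epoly c L z * epoly d L z - epoly (conv c d) L z)
            * Complex.abs z ^ L := by
    rw [hdecomp]
    have := Complex.abs.add_le ((f z - epoly c L z) * g z
      + epoly c L z * (g z - epoly d L z))
      (epoly c L z * epoly d L z - epoly (conv c d) L z)
    have h2' := Complex.abs.add_le ((f z - epoly c L z) * g z)
      (epoly c L z * (g z - epoly d L z))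
    nlinarith [AbsoluteValue.nonneg Complex.abs
      (epoly c L z * epoly d L z - epoly (conv c d) L z)]
  refine le_trans habs (add_le_add (add_le_add ?_ ?_) ?_)
  · -- term 1
    rw [map_mul]
    have e1 : Complex.abs (f z - epoly c L z) * Complex.abs (g z) * Complex.abs z ^ L
        = (Complex.abs (f z - epoly c L z) * Complex.abs z ^ L) * Complex.abs (g z) := by ring
    rw [e1]
    have hfb : Complex.abs (f z - epoly c L z) * Complex.abs z ^ L ≤ max B1 0 :=
      le_trans (h1 z hz hR1) (le_max_left _ _)
    have := hC2 z hz hR3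
    have h0 : (0:ℝ) ≤ Complex.abs (f z - epoly c L z) * Complex.abs z ^ L := by positivity
    nlinarith [le_max_right B1 (0:ℝ)]
  · -- term 2
    rw [map_mul]
    have e1 : Complex.abs (epoly c L z) * Complex.abs (g z - epoly d L z) * Complex.abs z ^ L
        = Complex.abs (epoly c L z) * (Complex.abs (g z - epoly d L z) * Complex.abs z ^ L) := by
      ring
    rw [e1]
    have hgb : Complex.abs (g z - epoly d L z) * Complex.abs z ^ L ≤ max B2 0 :=
      le_trans (h2 z hz hR2) (le_max_left _ _)
    have hpb := epoly_bound (c := c) (L := L) hz1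
    have h0 : (0:ℝ) ≤ Complex.abs (g z - epoly d L z) * Complex.abs z ^ L := by positivity
    nlinarith [AbsoluteValue.nonneg Complex.abs (epoly c L z), le_max_right B2 (0:ℝ)]
  · -- term 3
    rw [epoly_mul_split hz0]
    calc Complex.abs (∑ p ∈ (Finset.range L ×ˢ Finset.range L).filter
            (fun p => ¬ p.1 + p.2 < L), c p.1 * d p.2 * z ^ (-((p.1:ℤ) + (p.2:ℤ))))
          * Complex.abs z ^ L
        ≤ (∑ p ∈ (Finset.range L ×ˢ Finset.range L).filter (fun p => ¬ p.1 + p.2 < L),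
            Complex.abs (c p.1 * d p.2 * z ^ (-((p.1:ℤ) + (p.2:ℤ))))) * Complex.abs z ^ L := by
          have := Complex.abs.sum_le ((Finset.range L ×ˢ Finset.range L).filter
            (fun p => ¬ p.1 + p.2 < L)) (fun p => c p.1 * d p.2 * z ^ (-((p.1:ℤ) + (p.2:ℤ))))
          nlinarith [Finset.sum_nonneg (s := (Finset.range L ×ˢ Finset.range L).filter
            (fun p => ¬ p.1 + p.2 < L)) (f := fun p =>
            Complex.abs (c p.1 * d p.2 * z ^ (-((p.1:ℤ) + (p.2:ℤ)))))
            (fun _ _ => AbsoluteValue.nonneg _ _)]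
      _ = ∑ p ∈ (Finset.range L ×ˢ Finset.range L).filter (fun p => ¬ p.1 + p.2 < L),
            Complex.abs (c p.1) * Complex.abs (d p.2)
              * (Complex.abs z ^ (-((p.1:ℤ) + (p.2:ℤ))) * Complex.abs z ^ L) := by
          rw [Finset.sum_mul]
          refine Finset.sum_congr rfl fun p _ => ?_
          rw [map_mul, map_mul, map_zpow₀]
          ring
      _ ≤ ∑ p ∈ (Finset.range L ×ˢ Finset.range L).filter (fun p => ¬ p.1 + p.2 < L),
            Complex.abs (c p.1) * Complex.abs (d p.2) := by
          refine Finset.sum_le_sum fun p hp => ?_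
          have hmem := Finset.mem_filter.mp hp
          have hL : L ≤ p.1 + p.2 := by omega
          have e1 : Complex.abs z ^ (-((p.1:ℤ) + (p.2:ℤ))) * Complex.abs z ^ L
              = Complex.abs z ^ ((L : ℤ) - ((p.1:ℤ) + (p.2:ℤ))) := by
            rw [← zpow_natCast (Complex.abs z) L, ← zpow_add₀ hza]
            ring_nf
          rw [e1]
          have h1' : Complex.abs z ^ ((L : ℤ) - ((p.1:ℤ) + (p.2:ℤ))) ≤ 1 :=
            zpow_le_one_of_nonpos₀ hz1 (by omega)
          exact mul_le_of_le_one_right (by positivity) h1'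
      _ ≤ ∑ p ∈ Finset.range L ×ˢ Finset.range L,
            Complex.abs (c p.1) * Complex.abs (d p.2) := by
          refine Finset.sum_le_sum_of_subset_of_nonneg (Finset.filter_subset _ _)
            fun p _ _ => by positivity
      _ = Sc * Sd := by
          rw [hSc, hSd, Finset.sum_mul_sum, ← Finset.sum_product']
lemma IsExp.lower {S : Set ℂ} {L : ℕ} {f : ℂ → ℂ} {c : ℕ → ℂ}
    (hL : 1 ≤ L) (hf : IsExp S L f c) (hc : c 0 ≠ 0) :
    ∃ R : ℝ, ∀ z ∈ S, R ≤ Complex.abs z →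
      Complex.abs (c 0) / 2 ≤ Complex.abs (f z) ∧ f z ≠ 0 := by
  obtain ⟨B, R, h⟩ := hf
  set Sc := ∑ k ∈ Finset.range L, Complex.abs (c k) with hSc
  have hScpos : 0 ≤ Sc := Finset.sum_nonneg fun _ _ => AbsoluteValue.nonneg _ _
  set T := max B 0 + Sc with hT
  have hTpos : 0 ≤ T := by positivity
  have hc0 : 0 < Complex.abs (c 0) := by
    simpa using (AbsoluteValue.pos Complex.abs hc)
  refine ⟨max (max R 1) ((2 * T + Complex.abs (c 0)) / Complex.abs (c 0)),
    fun z hz hR => ?_⟩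
  have hz1 : 1 ≤ Complex.abs z := le_trans (le_trans (le_max_right _ _) (le_max_left _ _)) hR
  have hzR : R ≤ Complex.abs z := le_trans (le_trans (le_max_left _ _) (le_max_left _ _)) hR
  have hzK : (2 * T + Complex.abs (c 0)) / Complex.abs (c 0) ≤ Complex.abs z :=
    le_trans (le_max_right _ _) hR
  have hza : (0:ℝ) < Complex.abs z := lt_of_lt_of_le one_pos hz1
  -- |f z - c 0| * |z| ≤ T
  have key : Complex.abs (f z - c 0) * Complex.abs z ≤ T := by
    have h1 : Complex.abs (f z - epoly c L z) * Complex.abs z ≤ max B 0 := by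
      have hzL : Complex.abs z ≤ Complex.abs z ^ L := by
        calc Complex.abs z = Complex.abs z ^ 1 := (pow_one _).symm
          _ ≤ Complex.abs z ^ L := pow_le_pow_right₀ hz1 hL
      have := h z hz hzR
      nlinarith [AbsoluteValue.nonneg Complex.abs (f z - epoly c L z), le_max_left B (0:ℝ),
        le_max_right B (0:ℝ)]
    have h2 : Complex.abs (epoly c L z - c 0) * Complex.abs z ≤ Sc := by
      rw [epoly_eq c hL z]
      have e1 : c 0 + ∑ k ∈ Finset.Icc 1 (L-1), c k * z ^ (-(k:ℤ)) - c 0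
          = ∑ k ∈ Finset.Icc 1 (L-1), c k * z ^ (-(k:ℤ)) := by ring
      rw [e1]
      calc Complex.abs (∑ k ∈ Finset.Icc 1 (L-1), c k * z ^ (-(k:ℤ))) * Complex.abs z
          ≤ (∑ k ∈ Finset.Icc 1 (L-1), Complex.abs (c k * z ^ (-(k:ℤ)))) * Complex.abs z := by
            have := Complex.abs.sum_le (Finset.Icc 1 (L-1)) (fun k => c k * z ^ (-(k:ℤ)))
            nlinarith [Finset.sum_nonneg (s := Finset.Icc 1 (L-1))
              (f := fun k => Complex.abs (c k * z ^ (-(k:ℤ))))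
              (fun _ _ => AbsoluteValue.nonneg _ _)]
        _ = ∑ k ∈ Finset.Icc 1 (L-1),
              Complex.abs (c k) * (Complex.abs z ^ (-(k:ℤ)) * Complex.abs z) := by
            rw [Finset.sum_mul]
            exact Finset.sum_congr rfl fun k _ => by rw [map_mul, map_zpow₀]; ring
        _ ≤ ∑ k ∈ Finset.Icc 1 (L-1), Complex.abs (c k) := by
            refine Finset.sum_le_sum fun k hk => ?_
            have hk1 : 1 ≤ k := (Finset.mem_Icc.mp hk).1
            have e2 : Complex.abs z ^ (-(k:ℤ)) * Complex.abs z
                = Complex.abs z ^ (1 - (k:ℤ)) := by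
              rw [show (1 - (k:ℤ)) = -(k:ℤ) + 1 by ring, zpow_add₀ (ne_of_gt hza), zpow_one]
            rw [e2]
            have : Complex.abs z ^ (1 - (k:ℤ)) ≤ 1 :=
              zpow_le_one_of_nonpos₀ hz1 (by omega)
            exact mul_le_of_le_one_right (AbsoluteValue.nonneg _ _) this
        _ ≤ Sc := by
            rw [hSc]
            refine Finset.sum_le_sum_of_subset_of_nonneg ?_
              (fun _ _ _ => AbsoluteValue.nonneg _ _)
            intro k hk
            have := Finset.mem_Icc.mp hk
            exact Finset.mem_range.mpr (by omega)
    have tri : Complex.abs (f z - c 0)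
        ≤ Complex.abs (f z - epoly c L z) + Complex.abs (epoly c L z - c 0) := by
      have := Complex.abs.add_le (f z - epoly c L z) (epoly c L z - c 0)
      simpa using this
    nlinarith
  have hdist : Complex.abs (f z - c 0) ≤ Complex.abs (c 0) / 2 := by
    have h3 : 2 * T + Complex.abs (c 0) ≤ Complex.abs (c 0) * Complex.abs z := by
      rw [div_le_iff₀ hc0] at hzK
      linarith [mul_comm (Complex.abs (c 0)) (Complex.abs z)]
    nlinarith [AbsoluteValue.nonneg Complex.abs (f z - c 0)]
  have hlow : Complex.abs (c 0) / 2 ≤ Complex.abs (f z) := by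
    have tri : Complex.abs (c 0) ≤ Complex.abs (c 0 - f z) + Complex.abs (f z) := by
      have := Complex.abs.add_le (c 0 - f z) (f z)
      simpa using this
    rw [AbsoluteValue.map_sub] at tri
    linarith
  exact ⟨hlow, fun h0 => by rw [h0] at hlow; simp at hlow; linarith⟩

lemma IsExp.inv {S : Set ℂ} {L : ℕ} {f : ℂ → ℂ} {c : ℕ → ℂ}
    (hL : 1 ≤ L) (hf : IsExp S L f c) (hc : c 0 ≠ 0) :
    IsExp S L (fun z => (f z)⁻¹)
      (fun k => PowerSeries.coeff k (PowerSeries.mk c)⁻¹) := by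
  set d : ℕ → ℂ := fun k => PowerSeries.coeff k (PowerSeries.mk c)⁻¹ with hd
  have hmkd : PowerSeries.mk d = (PowerSeries.mk c)⁻¹ := by
    ext n; simp [hd, PowerSeries.coeff_mk]
  have hone : PowerSeries.mk c * PowerSeries.mk d = 1 := by
    rw [hmkd]
    exact PowerSeries.mul_inv_cancel _ (by simpa [PowerSeries.constantCoeff_mk] using hc)
  have hconv1 : ∀ z : ℂ, epoly (conv c d) L z = 1 := by
    intro z
    have : ∀ k, conv c d k = if k = 0 then 1 else 0 := by
      intro k
      rw [conv, hone]
      simp [PowerSeries.coeff_one]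
    rw [epoly]
    rw [Finset.sum_congr rfl (fun k _ => by rw [this k])]
    rw [Finset.sum_eq_single 0]
    · simp
    · intro k _ hk; simp [hk]
    · intro h0; exact absurd (Finset.mem_range.mpr (by omega)) h0
  have hg : IsExp S L (fun z => epoly d L z) d :=
    ⟨0, 0, fun z _ _ => by simp⟩
  obtain ⟨B3, R3, h3⟩ := hf.mul hg
  obtain ⟨R4, h4⟩ := IsExp.lower hL hf hc
  have hc0 : 0 < Complex.abs (c 0) := AbsoluteValue.pos Complex.abs hc
  refine ⟨max B3 0 * (2 / Complex.abs (c 0)), max R3 R4, fun z hz hR => ?_⟩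
  have hR3 : R3 ≤ Complex.abs z := le_trans (le_max_left _ _) hR
  have hR4 : R4 ≤ Complex.abs z := le_trans (le_max_right _ _) hR
  obtain ⟨hlow, hf0⟩ := h4 z hz hR4
  have hkey := h3 z hz hR3
  rw [hconv1 z] at hkey
  have hid : (f z)⁻¹ - epoly d L z = (1 - f z * epoly d L z) * (f z)⁻¹ := by
    field_simp
  rw [hid, map_mul, map_inv₀]
  have habs1 : Complex.abs (1 - f z * epoly d L z) = Complex.abs (f z * epoly d L z - 1) :=
    AbsoluteValue.map_sub _ _ _
  have hinv : (Complex.abs (f z))⁻¹ ≤ 2 / Complex.abs (c 0) := by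
    have h2 : (0:ℝ) < Complex.abs (c 0) / 2 := by positivity
    have h3 : (Complex.abs (f z))⁻¹ ≤ (Complex.abs (c 0) / 2)⁻¹ := by
      gcongr
    have h5 : (Complex.abs (c 0) / 2)⁻¹ = 2 / Complex.abs (c 0) := by
      field_simp
    linarith
  calc Complex.abs (1 - f z * epoly d L z) * (Complex.abs (f z))⁻¹ * Complex.abs z ^ L
      = (Complex.abs (f z * epoly d L z - 1) * Complex.abs z ^ L) * (Complex.abs (f z))⁻¹ := by
        rw [habs1]; ring
    _ ≤ max B3 0 * (2 / Complex.abs (c 0)) := by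
        refine mul_le_mul (le_trans hkey (le_max_left _ _)) hinv (by positivity)
          (le_max_right _ _)

lemma IsExp.sub {S : Set ℂ} {L : ℕ} {f g : ℂ → ℂ} {c d : ℕ → ℂ}
    (hf : IsExp S L f c) (hg : IsExp S L g d) :
    IsExp S L (fun z => f z - g z) (fun k => c k - d k) := by
  have h2 : IsExp S L (fun z => f z - g z) (fun k => c k + (-1) * d k) :=
    isExp_congr (fun z _ => by ring) (hf.add (hg.const_mul (-1)))
  have e : (fun k => c k + (-1:ℂ) * d k) = (fun k => c k - d k) := funext fun k => by ring
  rw [e] at h2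
  exact h2

lemma inv_coeff_zero (c : ℕ → ℂ) :
    PowerSeries.coeff 0 (PowerSeries.mk c)⁻¹ = (c 0)⁻¹ := by
  rw [PowerSeries.coeff_zero_eq_constantCoeff_apply, PowerSeries.constantCoeff_inv,
    PowerSeries.constantCoeff_mk]

lemma fromFmt {S : Set ℂ} {L : ℕ} (hL : 1 ≤ L) {f : ℂ → ℂ} {aa : ℕ → ℂ} {B R : ℝ}
    (h : ∀ z ∈ S, R ≤ Complex.abs z →
      Complex.abs (f z - (1 + ∑ k ∈ Finset.Icc 1 (L - 1), aa k * z ^ (-(k : ℤ))))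
        * Complex.abs z ^ L ≤ B) :
    IsExp S L f (fun k => if k = 0 then 1 else aa k) := by
  refine ⟨B, R, fun z hz hR => ?_⟩
  have e : epoly (fun k => if k = 0 then 1 else aa k) L z
      = 1 + ∑ k ∈ Finset.Icc 1 (L - 1), aa k * z ^ (-(k : ℤ)) := by
    rw [epoly_eq _ hL z]
    simp only [if_pos rfl]
    congr 1
    refine Finset.sum_congr rfl fun k hk => ?_
    have := (Finset.mem_Icc.mp hk).1
    rw [if_neg (by omega)]
  rw [e]
  exact h z hz hR

lemma toFmt {S : Set ℂ} {L : ℕ} (hL : 1 ≤ L) {f g : ℂ → ℂ} {cf cg : ℕ → ℂ}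
    (hf : IsExp S L f cf) (hg : IsExp S L g cg) (h0f : cf 0 = 1) (h0g : cg 0 = 1) :
    ∃ (a : ℕ → ℂ × ℂ) (B R : ℝ), ∀ z ∈ S, R ≤ Complex.abs z →
      Complex.abs (f z - (1 + ∑ k ∈ Finset.Icc 1 (L - 1), (a k).1 * z ^ (-(k : ℤ))))
          * Complex.abs z ^ L ≤ B ∧
      Complex.abs (g z - (1 + ∑ k ∈ Finset.Icc 1 (L - 1), (a k).2 * z ^ (-(k : ℤ))))
          * Complex.abs z ^ L ≤ B := by
  obtain ⟨B1, R1, h1⟩ := hf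
  obtain ⟨B2, R2, h2⟩ := hg
  refine ⟨fun k => (cf k, cg k), max B1 B2, max R1 R2, fun z hz hR => ?_⟩
  have e1 : (1 + ∑ k ∈ Finset.Icc 1 (L - 1),
      ((fun k => (cf k, cg k)) k).1 * z ^ (-(k : ℤ))) = epoly cf L z := by
    rw [epoly_eq cf hL z, h0f]
  have e2 : (1 + ∑ k ∈ Finset.Icc 1 (L - 1),
      ((fun k => (cf k, cg k)) k).2 * z ^ (-(k : ℤ))) = epoly cg L z := by
    rw [epoly_eq cg hL z, h0g]
  rw [e1, e2]
  exact ⟨le_trans (h1 z hz (le_trans (le_max_left _ _) hR)) (le_max_left _ _),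
    le_trans (h2 z hz (le_trans (le_max_right _ _) hR)) (le_max_right _ _)⟩

/-- Even part of a function on a set symmetric under `z ↦ -z`. -/
def evenPart (u : ℂ → ℂ) : ℂ → ℂ := fun z => (u z + u (-z)) / 2

/-- Odd part of a function on a set symmetric under `z ↦ -z`. -/
def oddPart (u : ℂ → ℂ) : ℂ → ℂ := fun z => (u z - u (-z)) / 2

/-- `D_m(z) = m₁(z)m₂(−z) + m₁(−z)m₂(z)`. -/
def Dfun (m : (ℂ → ℂ) × (ℂ → ℂ)) : ℂ → ℂ :=
  fun z => m.1 z * m.2 (-z) + m.1 (-z) * m.2 z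

/-- The product `m·n` of two pairs of functions. -/
def prodM (m n : (ℂ → ℂ) × (ℂ → ℂ)) : (ℂ → ℂ) × (ℂ → ℂ) :=
  (fun z => m.1 z * evenPart n.1 z + m.2 z * oddPart n.1 z,
   fun z => m.1 z * oddPart n.2 z + m.2 z * evenPart n.2 z)

/-- The inverse element `m̂`. -/
def hatM (m : (ℂ → ℂ) × (ℂ → ℂ)) : (ℂ → ℂ) × (ℂ → ℂ) :=
  (fun z => 2 * (evenPart m.2 z - oddPart m.1 z) / Dfun m z,
   fun z => 2 * (evenPart m.1 z - oddPart m.2 z) / Dfun m z)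

lemma Dfun_prodM (m n : (ℂ → ℂ) × (ℂ → ℂ)) (z : ℂ) :
    Dfun (prodM m n) z = Dfun m z * Dfun n z / 2 := by
  simp only [Dfun, prodM, evenPart, oddPart, neg_neg]
  ring

lemma Dfun_hatM (m : (ℂ → ℂ) × (ℂ → ℂ)) (z : ℂ) (hD : Dfun m z ≠ 0) :
    Dfun (hatM m) z = 4 / Dfun m z := by
  simp only [Dfun, neg_neg] at hD
  have hD2 : m.1 (-z) * m.2 z + m.1 z * m.2 (-z) ≠ 0 := by rw [add_comm]; exact hD
  have hinv := mul_inv_cancel₀ hD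
  simp only [Dfun, hatM, evenPart, oddPart, neg_neg]
  linear_combination 4 * (m.1 z * m.2 (-z) + m.1 (-z) * m.2 z)⁻¹ * hinv

lemma hat_ident (m : (ℂ → ℂ) × (ℂ → ℂ)) (z : ℂ) (hD : Dfun m z ≠ 0)
    (hD' : Dfun m (-z) ≠ 0) :
    (prodM m (hatM m)).1 z = 1 ∧ (prodM m (hatM m)).2 z = 1 ∧
    (prodM (hatM m) m).1 z = 1 ∧ (prodM (hatM m) m).2 z = 1 := by
  simp only [Dfun, neg_neg] at hD hD'
  have hinv := mul_inv_cancel₀ hD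
  refine ⟨?_, ?_, ?_, ?_⟩ <;>
  · simp only [prodM, hatM, evenPart, oddPart, Dfun, neg_neg]
    linear_combination hinv

/-- The class `M` of pairs of holomorphic functions on
`Ω = ℂ \ ([−μ₀, μ₀] ∪ iℝ)` with asymptotic expansion `1 + Σ m_k z^{−k} + O(z^{−L})`
along the unbounded symmetric set `S ⊆ Ω` and with `D_m ≠ 0` on `Ω` is closed under
the product `m·n` and the hat operation, and `m·m̂ = m̂·m = (1,1)` on `Ω`. -/
theorem stmt_0 (μ₀ : ℝ) (hμ₀ : 0 < μ₀)
    (Ω : Set ℂ) (hΩ : Ω = {z : ℂ | ¬ ((z.im = 0 ∧ |z.re| ≤ μ₀) ∨ z.re = 0)})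
    (S : Set ℂ) (hS : S ⊆ Ω) (hSu : ¬ Bornology.IsBounded S)
    (hSsym : ∀ z, z ∈ S → -z ∈ S)
    (L : ℕ) (hL : 1 ≤ L)
    (M : Set ((ℂ → ℂ) × (ℂ → ℂ)))
    (hM : ∀ m, m ∈ M ↔
      DifferentiableOn ℂ m.1 Ω ∧ DifferentiableOn ℂ m.2 Ω ∧
      (∃ (a : ℕ → ℂ × ℂ) (B R : ℝ), ∀ z ∈ S, R ≤ ‖z‖ →
        ‖m.1 z - (1 + ∑ k ∈ Finset.Icc 1 (L - 1), (a k).1 * z ^ (-(k : ℤ)))‖ *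
            ‖z‖ ^ L ≤ B ∧
        ‖m.2 z - (1 + ∑ k ∈ Finset.Icc 1 (L - 1), (a k).2 * z ^ (-(k : ℤ)))‖ *
            ‖z‖ ^ L ≤ B) ∧
      (∀ z ∈ Ω, Dfun m z ≠ 0))
    (m n : (ℂ → ℂ) × (ℂ → ℂ)) (hm : m ∈ M) (hn : n ∈ M) :
    prodM m n ∈ M ∧ hatM m ∈ M ∧
    (∀ z ∈ Ω, (prodM m (hatM m)).1 z = 1 ∧ (prodM m (hatM m)).2 z = 1 ∧
      (prodM (hatM m) m).1 z = 1 ∧ (prodM (hatM m) m).2 z = 1) := by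
  -- symmetry of Ω
  have hΩsym : ∀ z ∈ Ω, -z ∈ Ω := by
    intro z hz
    rw [hΩ] at hz ⊢
    simp only [Set.mem_setOf_eq, Complex.neg_im, Complex.neg_re, abs_neg,
      neg_eq_zero] at hz ⊢
    exact hz
  -- unpack memberships
  obtain ⟨hm1d, hm2d, ⟨am, Bm, Rm, hmB⟩, hmD⟩ := (hM m).mp hm
  obtain ⟨hn1d, hn2d, ⟨an, Bn, Rn, hnB⟩, hnD⟩ := (hM n).mp hn
  set c1 : ℕ → ℂ := fun k => if k = 0 then 1 else (am k).1 with hc1def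
  set c2 : ℕ → ℂ := fun k => if k = 0 then 1 else (am k).2 with hc2def
  set e1 : ℕ → ℂ := fun k => if k = 0 then 1 else (an k).1 with he1def
  set e2 : ℕ → ℂ := fun k => if k = 0 then 1 else (an k).2 with he2def
  have hc10 : c1 0 = 1 := by simp [hc1def]
  have hc20 : c2 0 = 1 := by simp [hc2def]
  have he10 : e1 0 = 1 := by simp [he1def]
  have he20 : e2 0 = 1 := by simp [he2def]
  have hm1 : IsExp S L m.1 c1 := fromFmt hL (fun z hz hR => (hmB z hz hR).1)
  have hm2 : IsExp S L m.2 c2 := fromFmt hL (fun z hz hR => (hmB z hz hR).2)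
  have hn1 : IsExp S L n.1 e1 := fromFmt hL (fun z hz hR => (hnB z hz hR).1)
  have hn2 : IsExp S L n.2 e2 := fromFmt hL (fun z hz hR => (hnB z hz hR).2)
  -- even and odd parts
  have heven : ∀ (u : ℂ → ℂ) (c : ℕ → ℂ), IsExp S L u c →
      IsExp S L (evenPart u) (fun k => 2⁻¹ * (c k + (-1) ^ k * c k)) := by
    intro u c hu
    exact isExp_congr (fun z _ => by simp only [evenPart]; ring)
      ((hu.add (hu.negArg hSsym)).const_mul 2⁻¹)
  have hodd : ∀ (u : ℂ → ℂ) (c : ℕ → ℂ), IsExp S L u c →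
      IsExp S L (oddPart u) (fun k => 2⁻¹ * (c k - (-1) ^ k * c k)) := by
    intro u c hu
    exact isExp_congr (fun z _ => by simp only [oddPart]; ring)
      ((hu.sub (hu.negArg hSsym)).const_mul 2⁻¹)
  -- differentiability helpers
  have hΩneg : ∀ u : ℂ → ℂ, DifferentiableOn ℂ u Ω →
      DifferentiableOn ℂ (fun z => u (-z)) Ω := fun u hu =>
    hu.comp (differentiable_neg.differentiableOn) (fun z hz => hΩsym z hz)
  have hEdiff : ∀ u : ℂ → ℂ, DifferentiableOn ℂ u Ω →
      DifferentiableOn ℂ (evenPart u) Ω := fun u hu =>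
    (hu.add (hΩneg u hu)).div_const 2
  have hOdiff : ∀ u : ℂ → ℂ, DifferentiableOn ℂ u Ω →
      DifferentiableOn ℂ (oddPart u) Ω := fun u hu =>
    (hu.sub (hΩneg u hu)).div_const 2
  have hDdiff : DifferentiableOn ℂ (Dfun m) Ω :=
    (hm1d.mul (hΩneg _ hm2d)).add ((hΩneg _ hm1d).mul hm2d)
  refine ⟨?_, ?_, ?_⟩
  · -- prodM m n ∈ M
    rw [hM]
    refine ⟨(hm1d.mul (hEdiff _ hn1d)).add (hm2d.mul (hOdiff _ hn1d)),
      (hm1d.mul (hOdiff _ hn2d)).add (hm2d.mul (hEdiff _ hn2d)), ?_, ?_⟩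
    · have hp1 := (hm1.mul (heven _ _ hn1)).add (hm2.mul (hodd _ _ hn1))
      have hp2 := (hm1.mul (hodd _ _ hn2)).add (hm2.mul (heven _ _ hn2))
      exact toFmt hL hp1 hp2
        (by simp [conv_zero, hc10, hc20, he10]; norm_num)
        (by simp [conv_zero, hc10, hc20, he20]; norm_num)
    · intro z hz
      rw [Dfun_prodM]
      exact div_ne_zero (mul_ne_zero (hmD z hz) (hnD z hz)) two_ne_zero
  · -- hatM m ∈ M
    rw [hM]
    have hHd1 : DifferentiableOn ℂ (hatM m).1 Ω :=
      (((hEdiff _ hm2d).sub (hOdiff _ hm1d)).const_mul 2).div hDdiff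
        (fun z hz => hmD z hz)
    have hHd2 : DifferentiableOn ℂ (hatM m).2 Ω :=
      (((hEdiff _ hm1d).sub (hOdiff _ hm2d)).const_mul 2).div hDdiff
        (fun z hz => hmD z hz)
    refine ⟨hHd1, hHd2, ?_, ?_⟩
    · have hDexp : IsExp S L (Dfun m) _ :=
        (hm1.mul (hm2.negArg hSsym)).add ((hm1.negArg hSsym).mul hm2)
      have hD0 : (fun k => conv c1 (fun j => (-1) ^ j * c2 j) k
          + conv (fun j => (-1) ^ j * c1 j) c2 k) 0 ≠ 0 := by
        simp [conv_zero, hc10, hc20]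
      have hDinv := hDexp.inv hL hD0
      have hN1 := ((heven _ _ hm2).sub (hodd _ _ hm1)).const_mul 2
      have hN2 := ((heven _ _ hm1).sub (hodd _ _ hm2)).const_mul 2
      have hH1 : IsExp S L (hatM m).1 _ :=
        isExp_congr (fun z _ => by
          show _ * (Dfun m z)⁻¹ = (hatM m).1 z
          simp only [hatM]
          rw [div_eq_mul_inv]) (hN1.mul hDinv)
      have hH2 : IsExp S L (hatM m).2 _ :=
        isExp_congr (fun z _ => by
          show _ * (Dfun m z)⁻¹ = (hatM m).2 z
          simp only [hatM]
          rw [div_eq_mul_inv]) (hN2.mul hDinv)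
      exact toFmt hL hH1 hH2
        (by simp [conv_zero, inv_coeff_zero, hc10, hc20])
        (by simp [conv_zero, inv_coeff_zero, hc10, hc20])
    · intro z hz
      rw [Dfun_hatM m z (hmD z hz)]
      exact div_ne_zero (by norm_num) (hmD z hz)
  · intro z hz
    exact hat_ident m z (hmD z hz) (hmD (-z) (hΩsym z hz))
end
end

section
/- Let I ⊆ ℝ be an open interval and let a, b : I → ℝ be real-analytic functions satisfying: (i) (a(y)b(x) − a(x)b(y))/(x − y) ≥ 0 for all x, y ∈ I with x ≠ y; (ii) a(x)² + b(x)² > 0 for every x ∈ I; (iii) a(x) ≥ 0 for every x ∈ I. Then either a(x) = 0 for every x ∈ I, or a(x) > 0 for every x ∈ I. -/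
/-- If `a`, `b` are real-analytic on an open interval `I`,
`(a(y)b(x) − a(x)b(y))/(x − y) ≥ 0` for all distinct `x, y ∈ I`,
`a(x)² + b(x)² > 0` on `I`, and `a ≥ 0` on `I`, then either `a ≡ 0` on `I`
or `a > 0` everywhere on `I`. -/
theorem stmt_2 (I : Set ℝ) (hIopen : IsOpen I) (hIconv : Convex ℝ I)
    (a b : ℝ → ℝ)
    (ha : AnalyticOnNhd ℝ a I) (hb : AnalyticOnNhd ℝ b I)
    (h1 : ∀ x ∈ I, ∀ y ∈ I, x ≠ y → 0 ≤ (a y * b x - a x * b y) / (x - y))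
    (h2 : ∀ x ∈ I, 0 < a x ^ 2 + b x ^ 2)
    (h3 : ∀ x ∈ I, 0 ≤ a x) :
    (∀ x ∈ I, a x = 0) ∨ (∀ x ∈ I, 0 < a x) := by
  by_cases hpos : ∀ x ∈ I, 0 < a x
  · exact Or.inr hpos
  push_neg at hpos
  obtain ⟨x₀, hx₀, hax₀'⟩ := hpos
  have hax₀ : a x₀ = 0 := le_antisymm hax₀' (h3 x₀ hx₀)
  have hbx₀ : b x₀ ≠ 0 := by
    intro hb0
    have := h2 x₀ hx₀
    rw [hax₀, hb0] at this
    norm_num at this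
  -- key sign fact
  have key : ∀ x ∈ I, x ≠ x₀ → 0 ≤ (- a x * b x₀) / (x - x₀) := by
    intro x hx hne
    have := h1 x hx x₀ hx₀ hne
    rw [hax₀] at this
    simpa using this
  obtain ⟨ε, hε, hball⟩ := Metric.isOpen_iff.mp hIopen x₀ hx₀
  left
  have hpre := hIconv.isPreconnected
  rcases hbx₀.lt_or_gt with hbneg | hbpos
  · -- b x₀ < 0 : a = 0 for x < x₀
    have hzero : ∀ x ∈ I, x < x₀ → a x = 0 := by
      intro x hx hlt
      have hk := key x hx hlt.ne
      have hxneg : x - x₀ < 0 := by linarith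
      rw [le_div_iff_of_neg hxneg] at hk
      nlinarith [h3 x hx]
    set z := x₀ - ε / 2 with hz
    have hzI : z ∈ I := hball (by rw [Metric.mem_ball, Real.dist_eq, abs_lt]; constructor <;> simp [hz] <;> linarith)
    have hev : a =ᶠ[nhds z] 0 := by
      filter_upwards [Metric.ball_mem_nhds z (by linarith : (0:ℝ) < ε / 2)] with w hw
      rw [Metric.mem_ball, Real.dist_eq, abs_lt] at hw
      exact hzero w (hball (by rw [Metric.mem_ball, Real.dist_eq, abs_lt]; constructor <;> [linarith; linarith])) (by simp [hz] at hw ⊢; linarith [hw.2])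
    have := ha.eqOn_zero_of_preconnected_of_eventuallyEq_zero hpre hzI hev
    exact fun x hx => this hx
  · -- b x₀ > 0 : a = 0 for x > x₀
    have hzero : ∀ x ∈ I, x₀ < x → a x = 0 := by
      intro x hx hlt
      have hk := key x hx hlt.ne'
      have hxpos : 0 < x - x₀ := by linarith
      rw [le_div_iff₀ hxpos] at hk
      nlinarith [h3 x hx]
    set z := x₀ + ε / 2 with hz
    have hzI : z ∈ I := hball (by rw [Metric.mem_ball, Real.dist_eq, abs_lt]; constructor <;> simp [hz] <;> linarith)
    have hev : a =ᶠ[nhds z] 0 := by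
      filter_upwards [Metric.ball_mem_nhds z (by linarith : (0:ℝ) < ε / 2)] with w hw
      rw [Metric.mem_ball, Real.dist_eq, abs_lt] at hw
      exact hzero w (hball (by rw [Metric.mem_ball, Real.dist_eq, abs_lt]; constructor <;> [linarith; linarith])) (by simp [hz] at hw ⊢; linarith [hw.1])
    have := ha.eqOn_zero_of_preconnected_of_eventuallyEq_zero hpre hzI hev
    exact fun x hx => this hx
end

section
/- Let n be an odd positive integer and let h(z) = Σ_{j odd, 1 ≤ j ≤ n} c_j z^j be an odd polynomial with real coefficients c_j of degree n. Let A > 0 and U = {x + iy : x, y ∈ ℝ, |x| ≤ A(1+|y|)^{−(n−1)}}. For each integer k ≥ 1 define the rational function r_k(z) = ((1 + h(z)/(2k))/(1 − h(z)/(2k)))^k. Then there exist an integer k₀ ≥ 1 and constants c₃ ≥ 1 and c₄ > 0 such that for every k ≥ k₀: (a) 1 − h(z)/(2k) ≠ 0 and 1 + h(z)/(2k) ≠ 0 for all z ∈ U (so r_k has no zeros or poles in U), and c₃^{−1} ≤ |r_k(z)| ≤ c₃ for all z ∈ U; (b) |r_k′(z)| ≤ c₄(1+|z|)^{n−1} for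 all z ∈ U; (c) for every z ∈ ℂ, r_k(z) → e^{h(z)} as k → ∞. -/
open Filter Topology

private lemma tendsto_one_add_div' (a : ℂ) :
    Tendsto (fun k : ℕ => (1 + a / k)^k) atTop (𝓝 (Complex.exp a)) := by
  rcases eq_or_ne a 0 with rfl | ha
  · simpa using (tendsto_const_nhds : Tendsto (fun _ : ℕ => (1:ℂ)) atTop (𝓝 1))
  have h0 : Tendsto (fun k : ℕ => a / (k:ℂ)) atTop (𝓝 0) := by
    rw [tendsto_zero_iff_norm_tendsto_zero]
    have heq : (fun k : ℕ => ‖a / (k:ℂ)‖) = fun k : ℕ => ‖a‖ / k := by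
      funext k; simp [norm_div]
    rw [heq]
    exact tendsto_const_div_atTop_nhds_zero_nat ‖a‖
  have h1 : Tendsto (fun k : ℕ => (1:ℂ) + a / k) atTop (𝓝 1) := by
    simpa using h0.const_add 1
  have hlog : HasDerivAt Complex.log 1 1 := by
    simpa using Complex.hasDerivAt_log (by simp : (1:ℂ) ∈ Complex.slitPlane)
  have hslope := hasDerivAt_iff_tendsto_slope.mp hlog
  have hmem : ∀ᶠ k : ℕ in atTop, (1:ℂ) + a / k ∈ ({1}ᶜ : Set ℂ) := by
    filter_upwards [eventually_ge_atTop 1] with k hk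
    have hk0 : (k:ℂ) ≠ 0 := Nat.cast_ne_zero.mpr (by omega)
    simp [div_eq_zero_iff, ha, hk0]
  have h2 : Tendsto (fun k : ℕ => (1:ℂ) + a / k) atTop (𝓝[≠] 1) :=
    tendsto_nhdsWithin_iff.mpr ⟨h1, hmem⟩
  have h3 : Tendsto (fun k : ℕ => slope Complex.log 1 (1 + a / k)) atTop (𝓝 1) :=
    hslope.comp h2
  have h4 : Tendsto (fun k : ℕ => (k:ℂ) * Complex.log (1 + a / k)) atTop (𝓝 a) := by
    have h3' := h3.const_mul a
    rw [mul_one] at h3'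
    apply h3'.congr'
    filter_upwards [eventually_ge_atTop 1] with k hk
    have hk0 : (k:ℂ) ≠ 0 := Nat.cast_ne_zero.mpr (by omega)
    rw [slope_def_field, Complex.log_one]
    rw [sub_zero, add_sub_cancel_left]
    field_simp
  have h5 := (Complex.continuous_exp.tendsto a).comp h4
  apply h5.congr'
  have hev : ∀ᶠ k : ℕ in atTop, ‖a / (k:ℂ)‖ < 1 :=
    (tendsto_zero_iff_norm_tendsto_zero.mp h0).eventually_lt_const one_pos
  filter_upwards [hev] with k hk
  have hne : (1:ℂ) + a / k ≠ 0 := by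
    intro hz
    have : a / (k:ℂ) = -1 := by linear_combination hz
    rw [this] at hk; simp at hk
  show Complex.exp ((k:ℂ) * Complex.log (1 + a/k)) = (1 + a/k)^k
  rw [Complex.exp_nat_mul, Complex.exp_log hne]

private lemma re_I_mul_pow (y : ℝ) {j : ℕ} (hj : Odd j) :
    ((Complex.I * (y:ℂ))^j).re = 0 := by
  obtain ⟨m, rfl⟩ := hj
  have hI : Complex.I ^ (2*m+1) = ((-1:ℝ)^m : ℂ) * Complex.I := by
    rw [pow_add, pow_mul, Complex.I_sq, pow_one]
    push_cast; ring
  rw [mul_pow, hI]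
  simp [Complex.mul_re, ← Complex.ofReal_pow]
  left
  rcases Nat.even_or_odd m with hm | hm
  · rw [hm.neg_one_pow]; simp
  · rw [hm.neg_one_pow]; simp


private lemma key_poly_ineq (u v : ℝ) (hu : |u| ≤ 1/4) :
    (1+u)^2 + v^2 ≤ (1 + 8*|u|) * ((1-u)^2 + v^2) := by
  obtain ⟨h1, h2⟩ := abs_le.mp hu
  have h9 : (9/16:ℝ) ≤ (1-u)^2 := by nlinarith
  have h10 : 9/16 * |u| ≤ (1-u)^2 * |u| := mul_le_mul_of_nonneg_right h9 (abs_nonneg u)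
  have hexp : (1 + 8*|u|) * ((1-u)^2 + v^2) - ((1+u)^2 + v^2) =
      8*((1-u)^2 * |u|) + 8*(|u| * v^2) - 4*u := by ring
  have hv : 0 ≤ |u| * v^2 := mul_nonneg (abs_nonneg u) (sq_nonneg v)
  have hle := le_abs_self u
  have h0 := abs_nonneg u
  linarith

private lemma re_ge_of_abs_re (w : ℂ) (hw : |w.re| ≤ 1/4) :
    (3/4:ℝ) ≤ (1-w).re ∧ (3/4:ℝ) ≤ (1+w).re := by
  obtain ⟨h1, h2⟩ := abs_le.mp hw
  constructor <;> simp [Complex.sub_re, Complex.add_re] <;> linarith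

private lemma frac_abs_le (w : ℂ) (hw : |w.re| ≤ 1/4) :
    ‖(1+w)/(1-w)‖ ≤ Real.exp (4*|w.re|) := by
  obtain ⟨hre, _⟩ := re_ge_of_abs_re w hw
  have hne : (1-w) ≠ 0 := by
    intro hz
    rw [hz] at hre; simp at hre; linarith
  have hsq : ‖(1+w)/(1-w)‖ ^ 2 ≤ Real.exp (4*|w.re|) ^ 2 := by
    rw [Complex.sq_norm, ← Real.exp_nat_mul]
    have h2 : Real.exp ((2:ℕ) * (4*|w.re|)) = Real.exp (8*|w.re|) := by norm_num; ring_nf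
    rw [h2, map_div₀]
    have hpos : 0 < Complex.normSq (1-w) := Complex.normSq_pos.mpr hne
    rw [div_le_iff₀ hpos]
    have key := key_poly_ineq w.re w.im hw
    have hexp : (1 + 8*|w.re|) ≤ Real.exp (8*|w.re|) := by
      have := Real.add_one_le_exp (8*|w.re|); linarith
    have h1 : Complex.normSq (1+w) = (1+w.re)^2 + w.im^2 := by
      simp [Complex.normSq_apply, Complex.add_re, Complex.add_im]; ring
    have h2' : Complex.normSq (1-w) = (1-w.re)^2 + w.im^2 := by
      simp [Complex.normSq_apply, Complex.sub_re, Complex.sub_im]; ring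
    rw [h1, h2']
    calc (1+w.re)^2 + w.im^2 ≤ (1 + 8*|w.re|) * ((1-w.re)^2 + w.im^2) := key
      _ ≤ Real.exp (8*|w.re|) * ((1-w.re)^2 + w.im^2) := by
          apply mul_le_mul_of_nonneg_right hexp; positivity
  exact (pow_le_pow_iff_left₀ (norm_nonneg _) (Real.exp_nonneg _) two_ne_zero).mp hsq

private lemma frac_abs_ge (w : ℂ) (hw : |w.re| ≤ 1/4) :
    (1/3 : ℝ) ≤ ‖(1+w)/(1-w)‖ := by
  obtain ⟨hre, _⟩ := re_ge_of_abs_re w hw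
  have hne : (1-w) ≠ 0 := by
    intro hz; rw [hz] at hre; simp at hre; linarith
  obtain ⟨h1, h2⟩ := abs_le.mp hw
  have hsq : (1/3:ℝ) ^ 2 ≤ ‖(1+w)/(1-w)‖ ^ 2 := by
    rw [Complex.sq_norm, map_div₀]
    have hpos : 0 < Complex.normSq (1-w) := Complex.normSq_pos.mpr hne
    rw [le_div_iff₀ hpos]
    have hA : Complex.normSq (1+w) = (1+w.re)^2 + w.im^2 := by
      simp [Complex.normSq_apply, Complex.add_re, Complex.add_im]; ring
    have hB : Complex.normSq (1-w) = (1-w.re)^2 + w.im^2 := by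
      simp [Complex.normSq_apply, Complex.sub_re, Complex.sub_im]; ring
    rw [hA, hB]
    nlinarith [sq_nonneg w.im]
  exact (pow_le_pow_iff_left₀ (by norm_num) (norm_nonneg _) two_ne_zero).mp hsq

private lemma frac_pow_le (w : ℂ) (k : ℕ) (hk : 1 ≤ k) (m : ℝ)
    (hm : |w.re| ≤ m/(2*k)) (hw4 : |w.re| ≤ 1/4) :
    ‖(1+w)/(1-w)‖ ^ k ≤ Real.exp (2*m) := by
  have h1 := frac_abs_le w hw4
  have hkR : (0:ℝ) < k := by exact_mod_cast Nat.pos_of_ne_zero (by omega)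
  calc ‖(1+w)/(1-w)‖ ^ k ≤ Real.exp (4*|w.re|) ^ k :=
        pow_le_pow_left₀ (norm_nonneg _) h1 k
    _ = Real.exp ((k:ℝ) * (4*|w.re|)) := (Real.exp_nat_mul _ k).symm
    _ ≤ Real.exp (2*m) := by
        apply Real.exp_le_exp.mpr
        have h2 := mul_le_mul_of_nonneg_left hm (by positivity : (0:ℝ) ≤ 4*k)
        have heq : 4*(k:ℝ) * (m/(2*k)) = 2*m := by field_simp; ring
        nlinarith


/-- For an odd real polynomial `h` of odd degree `n`, the rational
functions `r_k(z) = ((1 + h(z)/(2k))/(1 − h(z)/(2k)))^k` are, for large `k`, free of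
zeros and poles on the lens region `U = {x+iy : |x| ≤ A(1+|y|)^{−(n−1)}}`, uniformly
bounded above and below there, have derivatives bounded by `c₄(1+|z|)^{n−1}` on `U`,
and converge pointwise on `ℂ` to `e^{h(z)}`. -/
theorem stmt_3 (n : ℕ) (hn : Odd n) (hn1 : 1 ≤ n) (c : ℕ → ℝ)
    (hodd : ∀ j, Even j → c j = 0) (hdeg : c n ≠ 0)
    (h : ℂ → ℂ) (hh : ∀ z, h z = ∑ j ∈ Finset.range (n + 1), (c j : ℂ) * z ^ j)
    (A : ℝ) (hA : 0 < A)
    (U : Set ℂ) (hU : U = {z : ℂ | |z.re| ≤ A * (1 + |z.im|) ^ (-((n : ℤ) - 1))})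
    (r : ℕ → ℂ → ℂ)
    (hr : ∀ k z, r k z = ((1 + h z / (2 * (k : ℂ))) / (1 - h z / (2 * (k : ℂ)))) ^ k) :
    ∃ (k₀ : ℕ) (c₃ c₄ : ℝ), 1 ≤ k₀ ∧ 1 ≤ c₃ ∧ 0 < c₄ ∧
      (∀ k, k₀ ≤ k → ∀ z ∈ U,
        1 - h z / (2 * (k : ℂ)) ≠ 0 ∧ 1 + h z / (2 * (k : ℂ)) ≠ 0 ∧
        c₃⁻¹ ≤ ‖r k z‖ ∧ ‖r k z‖ ≤ c₃) ∧
      (∀ k, k₀ ≤ k → ∀ z ∈ U,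
        ‖deriv (r k) z‖ ≤ c₄ * (1 + ‖z‖) ^ (n - 1)) ∧
      (∀ z : ℂ, Tendsto (fun k : ℕ => r k z) atTop (nhds (Complex.exp (h z)))) := by
  classical
  set C : ℝ := ∑ j ∈ Finset.range (n+1), (j:ℝ) * |c j| with hCdef
  have hC0 : 0 ≤ C := Finset.sum_nonneg fun j _ => by positivity
  set M : ℝ := A * (1+A)^(n-1) * C with hMdef
  have hM0 : 0 ≤ M := by positivity
  set h' : ℂ → ℂ := fun z => ∑ j ∈ Finset.range (n+1), (c j : ℂ) * ((j:ℂ) * z^(j-1)) with hh'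
  have hder : ∀ z : ℂ, HasDerivAt h (h' z) z := by
    intro z
    have hfun : h = fun z : ℂ => ∑ j ∈ Finset.range (n+1), (c j:ℂ) * z^j := funext hh
    rw [hfun, hh']
    exact HasDerivAt.fun_sum fun j _ => (hasDerivAt_pow j z).const_mul _
  have hder_bound : ∀ z : ℂ, ‖h' z‖ ≤ C * (1 + ‖z‖)^(n-1) := by
    intro z
    have hz1 : (1:ℝ) ≤ 1 + ‖z‖ := le_add_of_nonneg_right (norm_nonneg z)
    calc ‖h' z‖
        ≤ ∑ j ∈ Finset.range (n+1), ‖(c j:ℂ) * ((j:ℂ) * z^(j-1))‖ :=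
          norm_sum_le _ _
      _ ≤ ∑ j ∈ Finset.range (n+1), (j:ℝ) * |c j| * (1 + ‖z‖)^(n-1) := by
          apply Finset.sum_le_sum
          intro j hj
          rw [norm_mul, norm_mul, norm_pow, Complex.norm_real, Real.norm_eq_abs, Complex.norm_natCast]
          have hj' : j - 1 ≤ n - 1 := by
            have := Finset.mem_range.mp hj; omega
          have hp : ‖z‖ ^ (j-1) ≤ (1 + ‖z‖)^(n-1) :=
            calc ‖z‖ ^ (j-1) ≤ (1 + ‖z‖)^(j-1) :=
                  pow_le_pow_left₀ (norm_nonneg z) (by linarith) _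
              _ ≤ (1 + ‖z‖)^(n-1) := pow_le_pow_right₀ hz1 hj'
          calc |c j| * ((j:ℝ) * ‖z‖ ^ (j-1))
              ≤ |c j| * ((j:ℝ) * (1 + ‖z‖)^(n-1)) := by
                exact mul_le_mul_of_nonneg_left
                  (mul_le_mul_of_nonneg_left hp (Nat.cast_nonneg j)) (abs_nonneg _)
            _ = (j:ℝ) * |c j| * (1 + ‖z‖)^(n-1) := by ring
      _ = C * (1 + ‖z‖)^(n-1) := by rw [hCdef, Finset.sum_mul]
  have hUmem : ∀ z ∈ U, |z.re| * (1 + |z.im|)^(n-1) ≤ A := by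
    intro z hz
    rw [hU] at hz
    simp only [Set.mem_setOf_eq] at hz
    have hcast : ((n - 1 : ℕ) : ℤ) = (n:ℤ) - 1 := by omega
    have hzz : (1 + |z.im|) ^ (-((n:ℤ) - 1)) = ((1 + |z.im|) ^ (n-1:ℕ))⁻¹ := by
      rw [← hcast, zpow_neg, zpow_natCast]
    rw [hzz, ← div_eq_mul_inv] at hz
    exact (le_div_iff₀ (by positivity)).mp hz
  have hRe : ∀ z ∈ U, |(h z).re| ≤ M := by
    intro z hz
    have hzle := hUmem z hz
    have ht1 : (1:ℝ) ≤ 1 + |z.im| := le_add_of_nonneg_right (abs_nonneg _)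
    have htpow : (1:ℝ) ≤ (1 + |z.im|)^(n-1) := one_le_pow₀ ht1
    have hxA : |z.re| ≤ A := by nlinarith [abs_nonneg z.re]
    have hB : ‖z‖ ≤ A + |z.im| :=
      calc ‖z‖ ≤ |z.re| + |z.im| := Complex.norm_le_abs_re_add_abs_im z
        _ ≤ A + |z.im| := by linarith
    have hterm : ∀ j ∈ Finset.range (n+1),
        |((c j:ℂ) * z^j).re| ≤ (j:ℝ) * |c j| * ((1+A)^(n-1) * A) := by
      intro j hj
      have hjn : j ≤ n := by have := Finset.mem_range.mp hj; omega
      have hre_eq : ((c j:ℂ) * z^j).re = c j * (z^j).re := by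
        simp [Complex.mul_re]
      rcases Nat.even_or_odd j with hje | hjo
      · rw [hre_eq, hodd j hje]
        simp
      · have him : ((Complex.I * (z.im:ℂ))^j).re = 0 := re_I_mul_pow z.im hjo
        have hzsub : z - Complex.I * (z.im:ℂ) = (z.re:ℂ) := by
          apply Complex.ext <;> simp
        have key : |(z^j).re| ≤ (j:ℝ) * ((A + |z.im|)^(j-1)) * |z.re| := by
          have h1 : (z^j).re = (z^j - (Complex.I*(z.im:ℂ))^j).re := by
            rw [Complex.sub_re, him]; ring
          rw [h1]
          calc |(z^j - (Complex.I*(z.im:ℂ))^j).re|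
              ≤ ‖z^j - (Complex.I*(z.im:ℂ))^j‖ := Complex.abs_re_le_norm _
            _ = ‖(∑ i ∈ Finset.range j,
                  z^i * (Complex.I*(z.im:ℂ))^(j-1-i)) * (z - Complex.I*(z.im:ℂ))‖ := by
                rw [geom_sum₂_mul]
            _ = ‖∑ i ∈ Finset.range j, z^i * (Complex.I*(z.im:ℂ))^(j-1-i)‖
                  * |z.re| := by rw [norm_mul, hzsub, Complex.norm_real, Real.norm_eq_abs]
            _ ≤ ((j:ℝ) * (A+|z.im|)^(j-1)) * |z.re| := by
                apply mul_le_mul_of_nonneg_right _ (abs_nonneg _)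
                calc ‖∑ i ∈ Finset.range j, z^i * (Complex.I*(z.im:ℂ))^(j-1-i)‖
                    ≤ ∑ i ∈ Finset.range j,
                        ‖z^i * (Complex.I*(z.im:ℂ))^(j-1-i)‖ :=
                      norm_sum_le _ _
                  _ ≤ ∑ _i ∈ Finset.range j, (A+|z.im|)^(j-1) := by
                      apply Finset.sum_le_sum
                      intro i hi
                      have hij : i < j := Finset.mem_range.mp hi
                      rw [norm_mul, norm_pow, norm_pow, norm_mul, Complex.norm_I,
                        Complex.norm_real, Real.norm_eq_abs, one_mul]
                      calc ‖z‖ ^ i * |z.im| ^ (j-1-i)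
                          ≤ (A+|z.im|)^i * (A+|z.im|)^(j-1-i) := by
                            apply mul_le_mul (pow_le_pow_left₀ (norm_nonneg z) hB i)
                              (pow_le_pow_left₀ (abs_nonneg _) (by linarith) _)
                              (by positivity) (by positivity)
                        _ = (A+|z.im|)^(j-1) := by
                            rw [← pow_add]
                            congr 1
                            omega
                  _ = (j:ℝ) * (A+|z.im|)^(j-1) := by
                      rw [Finset.sum_const, Finset.card_range, nsmul_eq_mul]
        have hAB : A + |z.im| ≤ (1+A) * (1+|z.im|) := by nlinarith [abs_nonneg z.im]
        have hstep : (A+|z.im|)^(j-1) ≤ (1+A)^(n-1) * (1+|z.im|)^(n-1) := by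
          rw [← mul_pow]
          calc (A+|z.im|)^(j-1) ≤ ((1+A)*(1+|z.im|))^(j-1) :=
                pow_le_pow_left₀ (by positivity) hAB _
            _ ≤ ((1+A)*(1+|z.im|))^(n-1) :=
                pow_le_pow_right₀ (by nlinarith [abs_nonneg z.im]) (by omega)
        have hfin : (1+|z.im|)^(n-1) * |z.re| ≤ A := by
          rw [mul_comm]; exact hzle
        calc |((c j:ℂ) * z^j).re| = |c j| * |(z^j).re| := by rw [hre_eq, abs_mul]
          _ ≤ |c j| * ((j:ℝ) * (A+|z.im|)^(j-1) * |z.re|) :=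
              mul_le_mul_of_nonneg_left key (abs_nonneg _)
          _ ≤ |c j| * ((j:ℝ) * ((1+A)^(n-1)*(1+|z.im|)^(n-1)) * |z.re|) := by
              apply mul_le_mul_of_nonneg_left _ (abs_nonneg _)
              apply mul_le_mul_of_nonneg_right _ (abs_nonneg _)
              exact mul_le_mul_of_nonneg_left hstep (Nat.cast_nonneg j)
          _ = ((j:ℝ) * |c j| * (1+A)^(n-1)) * ((1+|z.im|)^(n-1) * |z.re|) := by ring
          _ ≤ ((j:ℝ) * |c j| * (1+A)^(n-1)) * A :=
              mul_le_mul_of_nonneg_left hfin (by positivity)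
          _ = (j:ℝ) * |c j| * ((1+A)^(n-1) * A) := by ring
    calc |(h z).re| = |∑ j ∈ Finset.range (n+1), ((c j:ℂ) * z^j).re| := by
          rw [hh z, Complex.re_sum]
      _ ≤ ∑ j ∈ Finset.range (n+1), |((c j:ℂ)*z^j).re| := Finset.abs_sum_le_sum_abs _ _
      _ ≤ ∑ j ∈ Finset.range (n+1), (j:ℝ)*|c j| * ((1+A)^(n-1)*A) := Finset.sum_le_sum hterm
      _ = C * ((1+A)^(n-1)*A) := by rw [hCdef, ← Finset.sum_mul]
      _ = M := by rw [hMdef]; ring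
  set k₀ : ℕ := ⌈2*M⌉₊ + 1 with hk₀def
  have hk₀1 : 1 ≤ k₀ := Nat.le_add_left 1 _
  have hw_facts : ∀ k, k₀ ≤ k → ∀ z ∈ U,
      |(h z / (2*(k:ℂ))).re| ≤ M/(2*k) ∧ |(h z / (2*(k:ℂ))).re| ≤ 1/4 := by
    intro k hk z hz
    have hk1 : 1 ≤ k := le_trans hk₀1 hk
    have hkR : (0:ℝ) < k := by exact_mod_cast Nat.pos_of_ne_zero (by omega)
    have h2M : 2*M ≤ (k:ℝ) := by
      have h1 : (2*M) ≤ (⌈2*M⌉₊ : ℝ) := Nat.le_ceil _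
      have h2 : (⌈2*M⌉₊:ℝ) ≤ k := by exact_mod_cast le_trans (Nat.le_succ _) hk
      linarith
    have hre_eq : (h z / (2*(k:ℂ))).re = (h z).re / (2*k) := by
      have he : (2*(k:ℂ)) = ((2*(k:ℝ) : ℝ) : ℂ) := by push_cast; ring
      rw [he, Complex.div_ofReal_re]
    have hM' := hRe z hz
    have habs : |(h z / (2*(k:ℂ))).re| = |(h z).re| / (2*k) := by
      rw [hre_eq, abs_div, abs_of_pos (by positivity : (0:ℝ) < 2*k)]
    constructor
    · rw [habs]; gcongr
    · rw [habs, div_le_iff₀ (by positivity)]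
      nlinarith
  refine ⟨k₀, Real.exp (2*M), 6 * Real.exp (2*M) * C + 1, hk₀1,
    Real.one_le_exp (by positivity), by positivity, ?_, ?_, ?_⟩
  · -- part (a)
    intro k hk z hz
    obtain ⟨hwM, hw4⟩ := hw_facts k hk z hz
    set w := h z / (2*(k:ℂ)) with hwdef
    obtain ⟨hre1, hre2⟩ := re_ge_of_abs_re w hw4
    have hk1 : 1 ≤ k := le_trans hk₀1 hk
    have hne1 : 1 - w ≠ 0 := by
      intro hz0; rw [hz0] at hre1; simp at hre1; linarith
    have hne2 : 1 + w ≠ 0 := by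
      intro hz0; rw [hz0] at hre2; simp at hre2; linarith
    refine ⟨hne1, hne2, ?_, ?_⟩
    · have hwneg4 : |(-w).re| ≤ 1/4 := by simpa using hw4
      have hwnegM : |(-w).re| ≤ M/(2*k) := by simpa using hwM
      have hle := frac_pow_le (-w) k hk1 M hwnegM hwneg4
      have he : (1 + -w)/(1 - -w) = (1-w)/(1+w) := by ring_nf
      rw [he] at hle
      have hfne : (1+w)/(1-w) ≠ 0 := div_ne_zero hne2 hne1
      have habsr : ‖r k z‖ = ‖(1+w)/(1-w)‖ ^ k := by
        rw [hr k z, norm_pow]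
      have hrpos : 0 < ‖r k z‖ := by
        rw [habsr]
        exact pow_pos (norm_pos_iff.mpr hfne) k
      have hinv : (‖r k z‖)⁻¹ ≤ Real.exp (2*M) := by
        rw [habsr, ← inv_pow, ← norm_inv, inv_div]
        exact hle
      calc (Real.exp (2*M))⁻¹ ≤ ((‖r k z‖)⁻¹)⁻¹ :=
            inv_anti₀ (inv_pos.mpr hrpos) hinv
        _ = _ := inv_inv _
    · rw [hr k z, norm_pow]
      exact frac_pow_le w k hk1 M hwM hw4
  · -- part (b)
    intro k hk z hz
    obtain ⟨hwM, hw4⟩ := hw_facts k hk z hz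
    set w := h z / (2*(k:ℂ)) with hwdef
    obtain ⟨hre1, hre2⟩ := re_ge_of_abs_re w hw4
    have hk1 : 1 ≤ k := le_trans hk₀1 hk
    have hkC : (k:ℂ) ≠ 0 := Nat.cast_ne_zero.mpr (by omega)
    have hne1 : 1 - w ≠ 0 := by
      intro hz0; rw [hz0] at hre1; simp at hre1; linarith
    have hne2 : 1 + w ≠ 0 := by
      intro hz0; rw [hz0] at hre2; simp at hre2; linarith
    -- derivative computation
    have hwD : HasDerivAt (fun z => h z / (2*(k:ℂ))) (h' z / (2*(k:ℂ))) z :=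
      (hder z).div_const _
    have hnum : HasDerivAt (fun z => 1 + h z / (2*(k:ℂ))) (h' z / (2*(k:ℂ))) z :=
      hwD.const_add 1
    have hden : HasDerivAt (fun z => 1 - h z / (2*(k:ℂ))) (-(h' z / (2*(k:ℂ)))) z :=
      hwD.const_sub 1
    have hf : HasDerivAt (fun z => (1 + h z/(2*(k:ℂ))) / (1 - h z/(2*(k:ℂ))))
        ((h' z/(2*(k:ℂ)) * (1 - w) - (1 + w) * (-(h' z/(2*(k:ℂ))))) / (1-w)^2) z :=
      hnum.div hden hne1
    have hfk : HasDerivAt (r k)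
        ((k:ℂ) * ((1+w)/(1-w))^(k-1) *
          ((h' z/(2*(k:ℂ)) * (1 - w) - (1 + w) * (-(h' z/(2*(k:ℂ))))) / (1-w)^2)) z := by
      have hrfun : r k = fun z => ((1 + h z/(2*(k:ℂ)))/(1 - h z/(2*(k:ℂ))))^k := by
        funext x; exact hr k x
      rw [hrfun]
      exact hf.pow k
    have hnum_eq : h' z/(2*(k:ℂ)) * (1-w) - (1+w)*(-(h' z/(2*(k:ℂ)))) = h' z / (k:ℂ) := by
      field_simp
      ring
    have hderiv_eq : deriv (r k) z = ((1+w)/(1-w))^(k-1) * (h' z / (1-w)^2) := by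
      rw [hfk.deriv, hnum_eq]
      rw [show (k:ℂ) * ((1+w)/(1-w))^(k-1) * (h' z / (k:ℂ) / (1-w)^2)
          = ((1+w)/(1-w))^(k-1) * (h' z / (1-w)^2) * ((k:ℂ) * (k:ℂ)⁻¹) by ring]
      rw [mul_inv_cancel₀ hkC, mul_one]
    -- bounds
    have habs1m : (3/4:ℝ) ≤ ‖1-w‖ :=
      le_trans (le_trans hre1 (le_abs_self _)) (Complex.abs_re_le_norm _)
    have hfk_le : ‖(1+w)/(1-w)‖ ^ k ≤ Real.exp (2*M) :=
      frac_pow_le w k hk1 M hwM hw4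
    have hflow : (1/3:ℝ) ≤ ‖(1+w)/(1-w)‖ := frac_abs_ge w hw4
    have hfpow : ‖(1+w)/(1-w)‖ ^ (k-1) ≤ 3 * Real.exp (2*M) := by
      have hsucc : k - 1 + 1 = k := by omega
      have h1 : ‖(1+w)/(1-w)‖ ^ (k-1) * (1/3)
          ≤ ‖(1+w)/(1-w)‖ ^ (k-1) * ‖(1+w)/(1-w)‖ :=
        mul_le_mul_of_nonneg_left hflow (by positivity)
      rw [← pow_succ, hsucc] at h1
      linarith [hfk_le, h1]
    have hd16 : (9/16:ℝ) ≤ ‖1-w‖ ^ 2 := by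
      calc (9/16:ℝ) = (3/4)^2 := by norm_num
        _ ≤ ‖1-w‖ ^ 2 := pow_le_pow_left₀ (by norm_num) habs1m 2
    rw [hderiv_eq, norm_mul, norm_pow, norm_div (h' z) ((1-w)^2), norm_pow]
    have hHb := hder_bound z
    have hpow0 : (0:ℝ) ≤ (1 + ‖z‖)^(n-1) := by positivity
    calc ‖(1+w)/(1-w)‖ ^ (k-1) * (‖h' z‖ / ‖1-w‖ ^ 2)
        ≤ (3 * Real.exp (2*M)) * (‖h' z‖ / (9/16)) := by
          exact mul_le_mul hfpow
            (div_le_div_of_nonneg_left (norm_nonneg _) (by norm_num) hd16)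
            (by positivity) (by positivity)
      _ = (16/3 * Real.exp (2*M)) * ‖h' z‖ := by ring
      _ ≤ (16/3 * Real.exp (2*M)) * (C * (1 + ‖z‖)^(n-1)) := by
          apply mul_le_mul_of_nonneg_left hHb (by positivity)
      _ = (16/3 * Real.exp (2*M) * C) * (1 + ‖z‖)^(n-1) := by ring
      _ ≤ (6 * Real.exp (2*M) * C + 1) * (1 + ‖z‖)^(n-1) := by
          apply mul_le_mul_of_nonneg_right _ hpow0
          linarith [mul_nonneg (Real.exp_pos (2*M)).le hC0]
  · -- part (c)
    intro z
    have hconv1 := tendsto_one_add_div' (h z / 2)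
    have hconv2 := tendsto_one_add_div' (-(h z / 2))
    have hdiv := hconv1.div hconv2 (Complex.exp_ne_zero _)
    have hE : Complex.exp (h z/2) / Complex.exp (-(h z/2)) = Complex.exp (h z) := by
      rw [← Complex.exp_sub]
      ring_nf
    rw [hE] at hdiv
    apply hdiv.congr
    intro k
    simp only [Pi.div_apply]
    rw [hr k z, div_pow]
    have e1 : h z/2/(k:ℂ) = h z/(2*(k:ℂ)) := div_div _ _ _
    have e2 : (1:ℂ) + -(h z/2)/(k:ℂ) = 1 - h z/(2*(k:ℂ)) := by
      rw [neg_div, ← sub_eq_add_neg, div_div]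
    rw [e1, e2]
end

section
/- Let k be a positive integer and let a be a real number with 0 < a ≤ k. Then for every z ∈ ℂ with |Re z| ≤ a one has 1 − z/(2k) ≠ 0 and e^{−2a} ≤ |((1 + z/(2k))/(1 − z/(2k)))^k| ≤ e^{2a}. -/
lemma stmt4_aux (x : ℝ) (hx : |x| ≤ 1/2) : 1 + x ≤ Real.exp (4*|x|) * (1 - x) := by
  obtain ⟨h1, h2⟩ := abs_le.mp hx
  have he := Real.add_one_le_exp (4*|x|)
  rcases abs_cases x with ⟨hc, _⟩ | ⟨hc, _⟩ <;> rw [hc] at he ⊢ <;> nlinarith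

lemma stmt4_key (w : ℂ) (hw : |w.re| ≤ 1/2) :
    ‖1 + w‖ ≤ Real.exp (4*|w.re|) * ‖1 - w‖ := by
  obtain ⟨h1, h2⟩ := abs_le.mp hw
  set x := w.re
  set y := w.im
  set E := Real.exp (4*|x|) with hE
  have hE1 : 1 ≤ E := by
    rw [hE]; have := Real.add_one_le_exp (4*|x|); have := abs_nonneg x; linarith
  have haux := stmt4_aux x hw
  have hsq1 : (‖1 + w‖)^2 = (1+x)^2 + y^2 := by
    rw [Complex.sq_norm, Complex.normSq_apply]; simp [x, y]; ring
  have hsq2 : (‖1 - w‖)^2 = (1-x)^2 + y^2 := by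
    rw [Complex.sq_norm, Complex.normSq_apply]; simp [x, y]; ring
  have h0 : 0 ≤ 1 + x := by linarith
  have hp : (1+x)^2 ≤ (E*(1-x))^2 := by nlinarith
  have hsq : (‖1 + w‖)^2 ≤ (E * ‖1 - w‖)^2 := by
    rw [hsq1, mul_pow, hsq2]
    nlinarith [sq_nonneg y, mul_nonneg (mul_nonneg (by linarith : (0:ℝ) ≤ E - 1) (by linarith : (0:ℝ) ≤ E + 1)) (sq_nonneg y)]
  have hb : 0 ≤ E * ‖1 - w‖ := mul_nonneg (by linarith) (norm_nonneg _)
  nlinarith [norm_nonneg (1 + w)]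

/-- For a positive integer `k` and a real `a` with `0 < a ≤ k`,
every `z ∈ ℂ` with `|Re z| ≤ a` satisfies `1 − z/(2k) ≠ 0` and
`e^{−2a} ≤ |((1 + z/(2k))/(1 − z/(2k)))^k| ≤ e^{2a}`. -/
theorem stmt_4 (k : ℕ) (hk : 0 < k) (a : ℝ) (ha : 0 < a) (hak : a ≤ (k : ℝ))
    (z : ℂ) (hz : |z.re| ≤ a) :
    1 - z / (2 * (k : ℂ)) ≠ 0 ∧
    Real.exp (-2 * a) ≤ ‖((1 + z / (2 * (k : ℂ))) / (1 - z / (2 * (k : ℂ)))) ^ k‖ ∧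
    ‖((1 + z / (2 * (k : ℂ))) / (1 - z / (2 * (k : ℂ)))) ^ k‖ ≤ Real.exp (2 * a) := by
  have hk0 : (0:ℝ) < (k:ℝ) := by exact_mod_cast hk
  set w : ℂ := z / (2 * (k : ℂ)) with hwdef
  have hwre : w.re = z.re / (2*(k:ℝ)) := by
    rw [hwdef, show (2*(k:ℂ)) = ((2*(k:ℝ):ℝ):ℂ) by push_cast; ring, Complex.div_ofReal_re]
  have hxa : |w.re| ≤ a / (2*(k:ℝ)) := by
    rw [hwre, abs_div, abs_of_pos (by linarith : (0:ℝ) < 2*(k:ℝ))]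
    exact div_le_div_of_nonneg_right hz (by linarith) |>.trans_eq rfl
  have hhalf : a / (2*(k:ℝ)) ≤ 1/2 := by
    rw [div_le_div_iff₀ (by linarith) (by norm_num)]; linarith
  have hw12 : |w.re| ≤ 1/2 := hxa.trans hhalf
  obtain ⟨hw1, hw2⟩ := abs_le.mp hw12
  have hne : 1 - w ≠ 0 := by
    intro h
    have : (1 - w).re = 0 := by rw [h]; simp
    simp [Complex.sub_re] at this
    linarith
  have hne' : 1 + w ≠ 0 := by
    intro h
    have : (1 + w).re = 0 := by rw [h]; simp
    simp [Complex.add_re] at this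
    linarith
  have hpos1 : 0 < ‖1 + w‖ := norm_pos_iff.mpr hne'
  have hpos2 : 0 < ‖1 - w‖ := norm_pos_iff.mpr hne
  have hexp : Real.exp (4*|w.re|) ≤ Real.exp (2*a/(k:ℝ)) := by
    apply Real.exp_le_exp.mpr
    have : 4 * (a / (2*(k:ℝ))) = 2*a/(k:ℝ) := by field_simp; ring
    nlinarith [hxa]
  have hK1 := stmt4_key w hw12
  have hK2 : ‖1 - w‖ ≤ Real.exp (4*|w.re|) * ‖1 + w‖ := by
    have := stmt4_key (-w) (by simpa using hw12)
    simpa [sub_neg_eq_add, ← sub_eq_add_neg] using this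
  have hE := Real.exp_pos (2*a/(k:ℝ))
  have hupper : ‖(1 + w) / (1 - w)‖ ≤ Real.exp (2*a/(k:ℝ)) := by
    rw [norm_div, div_le_iff₀ hpos2]
    calc ‖1 + w‖ ≤ Real.exp (4*|w.re|) * ‖1 - w‖ := hK1
      _ ≤ Real.exp (2*a/(k:ℝ)) * ‖1 - w‖ := by
          exact mul_le_mul_of_nonneg_right hexp hpos2.le
  have hlower : Real.exp (-(2*a/(k:ℝ))) ≤ ‖(1 + w) / (1 - w)‖ := by
    rw [norm_div, le_div_iff₀ hpos2, Real.exp_neg]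
    rw [inv_mul_le_iff₀ hE]
    calc ‖1 - w‖ ≤ Real.exp (4*|w.re|) * ‖1 + w‖ := hK2
      _ ≤ Real.exp (2*a/(k:ℝ)) * ‖1 + w‖ := by
          exact mul_le_mul_of_nonneg_right hexp hpos1.le
  refine ⟨hne, ?_, ?_⟩
  · have : Real.exp (-(2*a/(k:ℝ))) ^ k ≤ ‖(1 + w) / (1 - w)‖ ^ k :=
      pow_le_pow_left₀ (Real.exp_pos _).le hlower k
    rw [← Real.exp_nat_mul] at this
    rw [norm_pow]
    refine le_trans (le_of_eq ?_) this
    congr 1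
    field_simp
  · have : ‖(1 + w) / (1 - w)‖ ^ k ≤ Real.exp (2*a/(k:ℝ)) ^ k :=
      pow_le_pow_left₀ (norm_nonneg _) hupper k
    rw [← Real.exp_nat_mul] at this
    rw [norm_pow]
    refine this.trans (le_of_eq ?_)
    congr 1
    field_simp
end

section
/- Let λ₀ ∈ ℝ, let q : [0, ∞) → ℝ be continuous, and let f : [0, ∞) → ℝ be a twice continuously differentiable function with f(x) > 0 for all x ≥ 0 satisfying −f″(x) + q(x)f(x) = λ₀ f(x) on [0, ∞). Define u(x) = f(x)·∫₀ˣ f(y)^{−2} dy. Then u is twice continuously differentiable and satisfies −u″(x) + q(x)u(x) = λ₀ u(x) on (0, ∞), and ∫₀^∞ u(x)² dx = ∞. In particular, the equation −v″ + q v = λ₀ v has a solution that does not belong to L²(0, ∞). -/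
open MeasureTheory

open Set Filter Topology ENNReal

/-- If `f > 0` is a twice continuously differentiable solution of
`−f″ + q f = λ₀ f` on `[0, ∞)` (with `q` continuous), then
`u(x) = f(x)·∫₀ˣ f(y)⁻² dy` is twice continuously differentiable, solves
`−u″ + q u = λ₀ u` on `(0, ∞)`, and `∫₀^∞ u(x)² dx = ∞`. -/
theorem stmt_6 (lam : ℝ) (q f : ℝ → ℝ) (f' f'' : ℝ → ℝ)
    (hq : ContinuousOn q (Set.Ici 0))
    (hfpos : ∀ x ∈ Set.Ici (0 : ℝ), 0 < f x)
    (hf' : ∀ x ∈ Set.Ici (0 : ℝ), HasDerivWithinAt f (f' x) (Set.Ici 0) x)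
    (hf'' : ∀ x ∈ Set.Ici (0 : ℝ), HasDerivWithinAt f' (f'' x) (Set.Ici 0) x)
    (hf''c : ContinuousOn f'' (Set.Ici 0))
    (heq : ∀ x ∈ Set.Ici (0 : ℝ), -f'' x + q x * f x = lam * f x)
    (u : ℝ → ℝ) (hu : ∀ x, u x = f x * ∫ y in (0 : ℝ)..x, (f y ^ 2)⁻¹) :
    ∃ u' u'' : ℝ → ℝ,
      (∀ x ∈ Set.Ici (0 : ℝ), HasDerivWithinAt u (u' x) (Set.Ici 0) x) ∧
      (∀ x ∈ Set.Ici (0 : ℝ), HasDerivWithinAt u' (u'' x) (Set.Ici 0) x) ∧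
      ContinuousOn u'' (Set.Ici 0) ∧
      (∀ x ∈ Set.Ioi (0 : ℝ), -u'' x + q x * u x = lam * u x) ∧
      ∫⁻ x in Set.Ici (0 : ℝ), ENNReal.ofReal (u x ^ 2) = ⊤ := by
  have hfc : ContinuousOn f (Set.Ici 0) := fun x hx => (hf' x hx).continuousWithinAt
  set h : ℝ → ℝ := fun x => (f (max x 0) ^ 2)⁻¹ with hh
  have hmax : Continuous fun x : ℝ => f (max x 0) :=
    hfc.comp_continuous (continuous_id.max continuous_const) (fun x => Set.mem_Ici.2 (le_max_right _ _))
  have hhc : Continuous h := by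
    apply Continuous.inv₀ (hmax.pow 2)
    intro x
    exact pow_ne_zero _ (ne_of_gt (hfpos _ (Set.mem_Ici.2 (le_max_right _ _))))
  have hhnn : ∀ x, 0 ≤ h x := fun x => inv_nonneg.2 (sq_nonneg _)
  have hhpos : ∀ x, 0 < h x := fun x => inv_pos.2 (pow_pos (hfpos _ (Set.mem_Ici.2 (le_max_right _ _))) 2)
  have hhx : ∀ x ∈ Set.Ici (0:ℝ), h x = (f x ^ 2)⁻¹ := by
    intro x hx; simp only [hh, max_eq_left (Set.mem_Ici.1 hx)]
  set g : ℝ → ℝ := fun x => ∫ t in (0:ℝ)..x, h t with hgdef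
  have hg : ∀ x, HasDerivAt g (h x) x := fun x =>
    intervalIntegral.integral_hasDerivAt_right (hhc.intervalIntegrable _ _)
      hhc.stronglyMeasurable.stronglyMeasurableAtFilter hhc.continuousAt
  have hgc : Continuous g := continuous_iff_continuousAt.2 fun x => (hg x).continuousAt
  -- g agrees with the original integral for x ≥ 0
  have hueq : ∀ x ∈ Set.Ici (0:ℝ), u x = f x * g x := by
    intro x hx
    rw [hu x]
    congr 1
    apply intervalIntegral.integral_congr
    intro y hy
    rw [Set.uIcc_of_le hx] at hy
    simp [hh, max_eq_left hy.1]
  -- monotonicity of g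
  have hgmono : Monotone g := by
    intro a b hab
    have : g b - g a = ∫ t in a..b, h t := by
      show (∫ t in (0:ℝ)..b, h t) - (∫ t in (0:ℝ)..a, h t) = _
      rw [← intervalIntegral.integral_add_adjacent_intervals (hhc.intervalIntegrable 0 a)
        (hhc.intervalIntegrable a b)]
      ring
    nlinarith [intervalIntegral.integral_nonneg (μ := volume) hab (fun t _ => hhnn t)]
  have hg0 : g 0 = 0 := by simp [hgdef]
  have hg1 : 0 < g 1 := by
    apply intervalIntegral.intervalIntegral_pos_of_pos_on (hhc.intervalIntegrable 0 1)
    · intro t _; exact hhpos t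
    · norm_num
  have hgpos : ∀ x ∈ Set.Ici (1:ℝ), 0 < g x := fun x hx => lt_of_lt_of_le hg1 (hgmono hx)
  -- derivatives
  refine ⟨fun x => f' x * g x + (f x)⁻¹, fun x => f'' x * g x, ?_, ?_, ?_, ?_, ?_⟩
  · intro x hx
    have : HasDerivWithinAt (fun y => f y * g y) (f' x * g x + f x * h x) (Set.Ici 0) x :=
      (hf' x hx).mul (hg x).hasDerivWithinAt
    have h2 : HasDerivWithinAt u (f' x * g x + f x * h x) (Set.Ici 0) x :=
      this.congr (fun y hy => hueq y hy) (hueq x hx)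
    convert h2 using 1
    rw [hhx x hx]
    have := (hfpos x hx).ne'
    field_simp
  · intro x hx
    have hfx := (hfpos x hx).ne'
    have h1 : HasDerivWithinAt (fun y => f' y * g y + (f y)⁻¹)
        (f'' x * g x + f' x * h x + (-(f' x) / f x ^ 2)) (Set.Ici 0) x :=
      ((hf'' x hx).mul (hg x).hasDerivWithinAt).add ((hf' x hx).inv hfx)
    convert h1 using 1
    rw [hhx x hx]
    field_simp
    ring
  · exact hf''c.mul hgc.continuousOn
  · intro x hx
    have hx' : x ∈ Set.Ici (0:ℝ) := Set.mem_Ici.2 (le_of_lt hx)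
    rw [hueq x hx']
    linear_combination g x * heq x hx'
  · -- the divergence of the integral
    have hupos : ∀ x ∈ Set.Ici (1:ℝ), 0 < u x := by
      intro x hx
      rw [hueq x (Set.mem_Ici.2 (le_trans zero_le_one (Set.mem_Ici.1 hx)))]
      exact mul_pos (hfpos x (Set.mem_Ici.2 (le_trans zero_le_one (Set.mem_Ici.1 hx)))) (hgpos x hx)
    set G : ℝ → ℝ := fun x => -(g x)⁻¹ with hGdef
    have hGd : ∀ x ∈ Set.Ici (1:ℝ), HasDerivAt G (h x / g x ^ 2) x := by
      intro x hx
      have h1 : HasDerivAt (fun y => -(g y)⁻¹) (-(-h x / g x ^ 2)) x :=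
        ((hg x).inv (hgpos x hx).ne').neg
      convert h1 using 1
      ring
    -- G tends to a finite limit at infinity
    set φ : ℝ → ℝ := fun x => -(g (max x 1))⁻¹ with hφdef
    have hφmono : Monotone φ := by
      intro a b hab
      have h1 : 0 < g (max a 1) := hgpos _ (Set.mem_Ici.2 (le_max_right _ _))
      have h2 : g (max a 1) ≤ g (max b 1) := hgmono (max_le_max hab le_rfl)
      have := one_div_le_one_div_of_le h1 h2
      simp only [one_div] at this
      simp only [hφdef]
      linarith
    have hφbdd : BddAbove (Set.range φ) := by
      refine ⟨0, ?_⟩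
      rintro y ⟨x, rfl⟩
      simp only [hφdef]
      have h1 : 0 < (g (max x 1))⁻¹ := inv_pos.2 (hgpos _ (le_max_right x 1))
      linarith
    have hφt : Tendsto φ atTop (𝓝 (⨆ x, φ x)) := tendsto_atTop_ciSup hφmono hφbdd
    have hGt : Tendsto G atTop (𝓝 (⨆ x, φ x)) := by
      apply hφt.congr'
      filter_upwards [eventually_ge_atTop (1:ℝ)] with x hx
      simp [hφdef, hGdef, max_eq_left hx]
    have hInt : IntegrableOn (fun x => h x / g x ^ 2) (Set.Ioi 1) :=
      integrableOn_Ioi_deriv_of_nonneg' hGd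
        (fun x hx => div_nonneg (hhnn x) (sq_nonneg _)) hGt
    -- the lintegral of (u x ^ 2)⁻¹ over Ici 1 is finite
    have hB : ∫⁻ x in Set.Ici (1:ℝ), ENNReal.ofReal ((u x ^ 2)⁻¹) < ⊤ := by
      rw [← Measure.restrict_congr_set Ioi_ae_eq_Ici]
      have hcong : ∫⁻ x in Set.Ioi (1:ℝ), ENNReal.ofReal ((u x ^ 2)⁻¹)
          = ∫⁻ x in Set.Ioi (1:ℝ), ENNReal.ofReal (h x / g x ^ 2) := by
        apply lintegral_congr_ae
        filter_upwards [ae_restrict_mem measurableSet_Ioi] with x hx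
        have hx1 : (1:ℝ) ≤ x := le_of_lt hx
        have hx0 : x ∈ Set.Ici (0:ℝ) := le_trans zero_le_one hx1
        rw [hueq x hx0, hhx x hx0]
        congr 1
        have h1 := (hfpos x hx0).ne'
        have h2 := (hgpos x hx1).ne'
        field_simp
      rw [hcong, ← ofReal_integral_eq_lintegral_ofReal hInt]
      · exact ENNReal.ofReal_lt_top
      · filter_upwards with x
        exact div_nonneg (hhnn x) (sq_nonneg _)
    -- measurability of u on Ici 1
    have hucont : ContinuousOn u (Set.Ici 1) := by
      apply ContinuousOn.congr (f := fun x => f x * g x)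
      · exact ((hfc.mul hgc.continuousOn).mono (Set.Ici_subset_Ici.2 zero_le_one))
      · intro x hx; exact hueq x (Set.mem_Ici.2 (le_trans zero_le_one (Set.mem_Ici.1 hx)))
    have hum : AEMeasurable u (volume.restrict (Set.Ici (1:ℝ))) :=
      hucont.aemeasurable measurableSet_Ici
    have hmeasu : AEMeasurable (fun x => ENNReal.ofReal (u x ^ 2))
        (volume.restrict (Set.Ici (1:ℝ))) :=
      ((hum.pow_const 2).ennreal_ofReal)
    -- pointwise AM-GM
    have key : ∀ x ∈ Set.Ici (1:ℝ),
        (2:ℝ≥0∞) ≤ ENNReal.ofReal (u x ^ 2) + ENNReal.ofReal ((u x ^ 2)⁻¹) := by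
      intro x hx
      have hpos := hupos x hx
      have h2 : (2:ℝ) ≤ u x ^ 2 + (u x ^ 2)⁻¹ := by
        have hsq : 0 < u x ^ 2 := by positivity
        have heq2 : u x ^ 2 + (u x ^ 2)⁻¹ - 2 = (u x ^ 2 - 1)^2 * (u x ^ 2)⁻¹ := by
          field_simp
          ring
        nlinarith [mul_nonneg (sq_nonneg (u x ^ 2 - 1)) (inv_pos.2 hsq).le]
      calc (2:ℝ≥0∞) = ENNReal.ofReal 2 := by norm_num
        _ ≤ ENNReal.ofReal (u x ^ 2 + (u x ^ 2)⁻¹) := ENNReal.ofReal_le_ofReal h2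
        _ = _ := ENNReal.ofReal_add (sq_nonneg _) (by positivity)
    have htop : (⊤:ℝ≥0∞) ≤ (∫⁻ x in Set.Ici (1:ℝ), ENNReal.ofReal (u x ^ 2))
        + ∫⁻ x in Set.Ici (1:ℝ), ENNReal.ofReal ((u x ^ 2)⁻¹) := by
      calc (⊤:ℝ≥0∞) = ∫⁻ _ in Set.Ici (1:ℝ), (2:ℝ≥0∞) := by
            rw [setLIntegral_const]
            simp [Real.volume_Ici]
        _ ≤ ∫⁻ x in Set.Ici (1:ℝ),
              (ENNReal.ofReal (u x ^ 2) + ENNReal.ofReal ((u x ^ 2)⁻¹)) := by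
            apply lintegral_mono_ae
            filter_upwards [ae_restrict_mem measurableSet_Ici] with x hx
            exact key x hx
        _ = _ := lintegral_add_left' hmeasu _
    have hA : ∫⁻ x in Set.Ici (1:ℝ), ENNReal.ofReal (u x ^ 2) = ⊤ := by
      by_contra hne
      have : (∫⁻ x in Set.Ici (1:ℝ), ENNReal.ofReal (u x ^ 2))
          + (∫⁻ x in Set.Ici (1:ℝ), ENNReal.ofReal ((u x ^ 2)⁻¹)) < ⊤ :=
        ENNReal.add_lt_top.2 ⟨lt_top_iff_ne_top.2 hne, hB⟩
      exact absurd htop this.not_ge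
    rw [eq_top_iff, ← hA]
    exact lintegral_mono_set (Set.Ici_subset_Ici.2 zero_le_one)
end

section
/- Let m₊, m₋ ∈ ℂ with Im m₊ > 0 and Im m₋ > 0 (so that m₊ + m₋ ≠ 0). Define m₁ = −1/(m₊ + m₋), m₂ = m₊ m₋/(m₊ + m₋), and R = (conj(m₊) + m₋)/(m₊ + m₋). Then Im m₁ > 0, Im m₂ > 0, |R| ≤ 1, and, writing ξ₁ = arg(m₁)/π and ξ₂ = arg(m₂)/π (so that ξ₁, ξ₂ ∈ [0, 1] since m₁, m₂ lie in the open upper half-plane), one has |ξ₁ − 1/2| ≤ |R|/2 and |ξ₂ − 1/2| ≤ |R|/2. -/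
open Complex Real

lemma key_arg (m : ℂ) (r : ℝ) (him : 0 < m.im) (hre : |m.re| ≤ r * ‖m‖) :
    |Complex.arg m / Real.pi - 1 / 2| ≤ r / 2 := by
  have hm : m ≠ 0 := fun h => by simp [h] at him
  have habs : 0 < ‖m‖ := norm_pos_iff.mpr hm
  have hr : 0 ≤ r := by
    by_contra h
    push_neg at h
    nlinarith [abs_nonneg m.re]
  have hθ0 : 0 < Complex.arg m := lt_of_le_of_ne (Complex.arg_nonneg_iff.2 him.le)
    (fun h => by
      have := Complex.arg_eq_zero_iff.mp h.symm
      exact absurd this.2 him.ne')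
  have hθπ : Complex.arg m < Real.pi := Complex.arg_lt_pi_iff.2 (Or.inr him.ne')
  set θ := Complex.arg m with hθ
  have hpi : (0:ℝ) < Real.pi := Real.pi_pos
  have hsin : |Real.sin (θ - Real.pi / 2)| ≤ r := by
    have : Real.sin (θ - Real.pi / 2) = -Real.cos θ := by
      rw [Real.sin_sub, Real.sin_pi_div_two, Real.cos_pi_div_two]; ring
    rw [this, abs_neg, Complex.cos_arg hm, abs_div, abs_of_pos habs, div_le_iff₀ habs]
    exact hre
  have hrange : |θ - Real.pi / 2| ≤ Real.pi / 2 := by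
    rw [abs_le]; constructor <;> linarith
  have hjordan : 2 / Real.pi * |θ - Real.pi / 2| ≤ |Real.sin (θ - Real.pi / 2)| := by
    rcases abs_cases (θ - Real.pi / 2) with ⟨h1, h2⟩ | ⟨h1, h2⟩
    · rw [h1]
      calc 2 / Real.pi * (θ - Real.pi/2) ≤ Real.sin (θ - Real.pi/2) :=
            Real.mul_le_sin (by linarith) (by rw [h1] at hrange; linarith)
        _ ≤ |Real.sin (θ - Real.pi/2)| := le_abs_self _
    · rw [h1]
      have := Real.mul_le_sin (x := Real.pi/2 - θ) (by linarith)
        (by rw [h1] at hrange; linarith)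
      calc 2 / Real.pi * -(θ - Real.pi/2) ≤ Real.sin (Real.pi/2 - θ) := by
            rw [show -(θ - Real.pi/2) = Real.pi/2 - θ by ring]; exact this
        _ = -Real.sin (θ - Real.pi/2) := by rw [← Real.sin_neg]; ring_nf
        _ ≤ |Real.sin (θ - Real.pi/2)| := neg_le_abs _
  have h2 : |θ - Real.pi / 2| ≤ Real.pi / 2 * r := by
    have := hjordan.trans hsin
    rw [div_mul_eq_mul_div, div_le_iff₀ hpi] at this
    nlinarith
  have heq : θ / Real.pi - 1 / 2 = (θ - Real.pi / 2) / Real.pi := by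
    field_simp
  rw [heq, abs_div, abs_of_pos hpi, div_le_iff₀ hpi]
  nlinarith

lemma abs_le_of_sq_le_sq'' (a b : ℝ) (hb : 0 ≤ b) (h : a ^ 2 ≤ b ^ 2) : |a| ≤ b := by
  nlinarith [abs_nonneg a, _root_.sq_abs a]

/-- For `m₊, m₋` in the open upper half-plane, setting
`m₁ = −1/(m₊+m₋)`, `m₂ = m₊m₋/(m₊+m₋)` and `R = (conj m₊ + m₋)/(m₊+m₋)`,
one has `Im m₁ > 0`, `Im m₂ > 0`, `|R| ≤ 1`, and the xi-functions
`ξⱼ = arg(mⱼ)/π ∈ [0,1]` satisfy `|ξⱼ − 1/2| ≤ |R|/2`. -/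
theorem stmt_7 (mp mm : ℂ) (hp : 0 < mp.im) (hm : 0 < mm.im) :
    mp + mm ≠ 0 ∧
    0 < (-(mp + mm)⁻¹).im ∧
    0 < (mp * mm / (mp + mm)).im ∧
    ‖(starRingEnd ℂ mp + mm) / (mp + mm)‖ ≤ 1 ∧
    |Complex.arg (-(mp + mm)⁻¹) / Real.pi - 1 / 2| ≤
      ‖(starRingEnd ℂ mp + mm) / (mp + mm)‖ / 2 ∧
    |Complex.arg (mp * mm / (mp + mm)) / Real.pi - 1 / 2| ≤
      ‖(starRingEnd ℂ mp + mm) / (mp + mm)‖ / 2 := by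
  set s := mp + mm with hsdef
  have hsim : 0 < s.im := by
    rw [hsdef, Complex.add_im]; linarith
  have hs : s ≠ 0 := fun h => by rw [h] at hsim; simp at hsim
  have hns : 0 < Complex.normSq s := Complex.normSq_pos.2 hs
  have habs : 0 < ‖s‖ := norm_pos_iff.mpr hs
  have hRnum : ‖starRingEnd ℂ mp + mm‖ ^ 2
      = (mp.re + mm.re) ^ 2 + (mm.im - mp.im) ^ 2 := by
    rw [Complex.sq_norm]
    simp [Complex.normSq_apply, Complex.add_re, Complex.add_im]
    ring
  have hRabs : ‖(starRingEnd ℂ mp + mm) / s‖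
      = ‖starRingEnd ℂ mp + mm‖ / ‖s‖ := norm_div _ _
  have hsre : s.re = mp.re + mm.re := by rw [hsdef, Complex.add_re]
  have hsim' : s.im = mp.im + mm.im := by rw [hsdef, Complex.add_im]
  have him1 : 0 < (-s⁻¹).im := by
    rw [Complex.neg_im, Complex.inv_im, hsim']
    have : -(-(mp.im + mm.im) / Complex.normSq s)
        = (mp.im + mm.im) / Complex.normSq s := by ring
    rw [this]
    positivity
  have him2 : 0 < (mp * mm / s).im := by
    rw [Complex.div_im, Complex.mul_re, Complex.mul_im, hsre, hsim']
    have h1 : (mp.re * mm.im + mp.im * mm.re) * (mp.re + mm.re) / Complex.normSq s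
        - (mp.re * mm.re - mp.im * mm.im) * (mp.im + mm.im) / Complex.normSq s
        = (mm.im * (mp.re ^ 2 + mp.im ^ 2) + mp.im * (mm.re ^ 2 + mm.im ^ 2))
          / Complex.normSq s := by
      field_simp
      ring
    rw [h1]
    have hq1 : 0 < mp.re ^ 2 + mp.im ^ 2 := by positivity
    have hq2 : 0 < mm.re ^ 2 + mm.im ^ 2 := by positivity
    positivity
  have hRle : ‖(starRingEnd ℂ mp + mm) / s‖ ≤ 1 := by
    rw [hRabs, div_le_one habs]
    have hsq : ‖starRingEnd ℂ mp + mm‖ ^ 2 ≤ ‖s‖ ^ 2 := by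
      rw [hRnum, Complex.sq_norm, Complex.normSq_apply, hsre, hsim']
      nlinarith [mul_pos hp hm]
    nlinarith [norm_nonneg (starRingEnd ℂ mp + mm), habs]
  refine ⟨hs, him1, him2, hRle, ?_, ?_⟩
  · apply key_arg _ _ him1
    have e1 : ‖-s⁻¹‖ = (‖s‖)⁻¹ := by
      rw [norm_neg, norm_inv]
    rw [e1, hRabs, Complex.neg_re, Complex.inv_re, abs_neg, abs_div,
      abs_of_pos hns, hsre]
    have e2 : ‖starRingEnd ℂ mp + mm‖ / ‖s‖ * (‖s‖)⁻¹
        = ‖starRingEnd ℂ mp + mm‖ / Complex.normSq s := by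
      rw [← Complex.norm_mul_self_eq_normSq]
      field_simp
    rw [e2]
    gcongr
    apply abs_le_of_sq_le_sq'' _ _ (norm_nonneg _)
    rw [hRnum]
    nlinarith [sq_nonneg (mm.im - mp.im)]
  · apply key_arg _ _ him2
    have e1 : ‖mp * mm / s‖
        = ‖mp‖ * ‖mm‖ / ‖s‖ := by
      rw [norm_div, norm_mul]
    rw [hRabs, e1, Complex.div_re]
    have e2 : ‖starRingEnd ℂ mp + mm‖ / ‖s‖
        * (‖mp‖ * ‖mm‖ / ‖s‖)
        = ‖starRingEnd ℂ mp + mm‖ * (‖mp‖ * ‖mm‖)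
          / Complex.normSq s := by
      rw [div_mul_div_comm, Complex.norm_mul_self_eq_normSq]
    rw [e2]
    have e3 : (mp * mm).re * s.re / Complex.normSq s
        + (mp * mm).im * s.im / Complex.normSq s
        = ((mp * mm).re * s.re + (mp * mm).im * s.im) / Complex.normSq s := by ring
    rw [e3, abs_div, abs_of_pos hns]
    gcongr
    apply abs_le_of_sq_le_sq'' _ _ (by positivity)
    rw [mul_pow, mul_pow, hRnum, Complex.sq_norm, Complex.sq_norm]
    simp only [Complex.mul_re, Complex.mul_im, Complex.normSq_apply, hsre, hsim']
    nlinarith [sq_nonneg ((mp.re ^ 2 + mp.im ^ 2) * mm.im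
      - (mm.re ^ 2 + mm.im ^ 2) * mp.im)]
end

section
/- Let L′, M′, N be positive integers with 2M′ < L′, N odd, 3 ≤ N ≤ M′, and set L = 1 + ⌊L′/2⌋. Let S ⊆ {z ∈ ℂ : Re z > 0} be unbounded, and let u₁, u₂ : S → ℂ be functions such that there exist real numbers a_k, b_k (1 ≤ k ≤ M′) with u₁(z) = (2z)^{−1}(1 + Σ_{k=1}^{M′} a_k z^{−2k} + O(z^{−L′})) and u₂(z) = −(z/2)(1 + Σ_{k=1}^{M′} b_k z^{−2k} + O(z^{−L′})) as z → ∞ in S, and such that there exist real numbers d_k (N ≤ k ≤ M′) with d_N ≠ 0 and 1 + 4u₁(z)u₂(z) = −Σ_{k=N}^{M′} d_k z^{−2k} + O(z^{−L′−N}) as z → ∞ in S. Let s : S → ℂ be any function with s(z)² = 1 + 4u₁(z)u₂(z) for all z ∈ S and such that z^N s(z) converges to a finite limit as z → ∞ in S. Then the function m(z) := (1 + s(z))/(2u₁(z)) admits an asymptotic expansion: there exist complex numbers c₁, …, c_{L−2} such that m(z) = z + Σ_{k=1}^{L−2} c_k z^{−k} + O(z^{−L+1}) as z → ∞ in S. 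-/
open Filter Asymptotics
noncomputable section

namespace Stmt8

variable (S : Set ℂ)

noncomputable def F (S : Set ℂ) : Filter ℂ := Bornology.cobounded ℂ ⊓ 𝓟 S

lemma eventually_F_iff {p : ℂ → Prop} :
    (∀ᶠ z in F S, p z) ↔ ∃ R : ℝ, ∀ z ∈ S, R ≤ ‖z‖ → p z := by
  rw [F, eventually_inf_principal]
  constructor
  · intro h
    rw [← comap_norm_atTop, eventually_comap] at h
    obtain ⟨R, hR⟩ := eventually_atTop.1 h
    exact ⟨R, fun z hz hRz => hR ‖z‖ hRz z rfl hz⟩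
  · rintro ⟨R, hR⟩
    filter_upwards [eventually_cobounded_le_norm R] with z hz hzS
    exact hR z hzS hz

lemma eventually_F_le (r : ℝ) : ∀ᶠ z in F S, r ≤ ‖z‖ := by
  rw [F]
  have h := eventually_cobounded_le_norm (E := ℂ) r
  have : Bornology.cobounded ℂ ⊓ 𝓟 S ≤ Bornology.cobounded ℂ := inf_le_left
  filter_upwards [this h] with z hz
  exact hz

lemma eventually_F_mem : ∀ᶠ z in F S, z ∈ S := by
  have : Bornology.cobounded ℂ ⊓ 𝓟 S ≤ 𝓟 S := inf_le_right
  exact this (eventually_principal.2 fun _ h => h)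

lemma eventually_F_ne : ∀ᶠ z in F S, z ≠ 0 := by
  filter_upwards [eventually_F_le S 1] with z hz
  intro h; rw [h] at hz; simp at hz; linarith

lemma F_neBot (hSu : ¬ Bornology.IsBounded S) : (F S).NeBot := by
  rw [neBot_iff]
  intro h
  apply hSu
  have : ∀ᶠ z in F S, False := by rw [h]; exact eventually_bot
  obtain ⟨R, hR⟩ := (eventually_F_iff S).1 this
  apply Bornology.IsBounded.subset (Metric.isBounded_ball (x := (0:ℂ)) (r := |R| + 1))
  intro z hz
  rw [Metric.mem_ball, dist_zero_right]
  by_contra hc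
  exact hR z hz (le_trans (le_trans (le_abs_self R) (by linarith)) (not_lt.1 hc))


/-- bound function `z ↦ z^{-T}` -/
def bnd (T : ℕ) : ℂ → ℂ := fun z => z ^ (-(T : ℤ))

/-- partial expansion -/
def pp (e : ℕ → ℂ) (T : ℕ) (z : ℂ) : ℂ := ∑ k ∈ Finset.range T, e k * z ^ (-(k : ℤ))

variable (S : Set ℂ)

/-- `g` has asymptotic expansion with coefficients `e` to order `T` along `F S`. -/
def ExpW (g : ℂ → ℂ) (e : ℕ → ℂ) (T : ℕ) : Prop :=
  (fun z => g z - pp e T z) =O[F S] bnd T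

def Exp (g : ℂ → ℂ) (T : ℕ) : Prop := ∃ e, ExpW S g e T

lemma bnd_isBigO_bnd {i j : ℕ} (h : j ≤ i) : bnd i =O[F S] bnd j := by
  rw [isBigO_iff]
  refine ⟨1, ?_⟩
  filter_upwards [eventually_F_le S 1] with z hz
  rw [one_mul, bnd, bnd, norm_zpow, norm_zpow]
  have h1 : (1:ℝ) ≤ ‖z‖ := hz
  exact zpow_le_zpow_right₀ h1 (by omega)

lemma bnd_isBigO_one (T : ℕ) : bnd T =O[F S] (fun _ => (1:ℂ)) := by
  have h0 : bnd 0 = fun _ : ℂ => (1:ℂ) := by funext z; simp [bnd]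
  have := bnd_isBigO_bnd S (Nat.zero_le T)
  rwa [h0] at this

lemma term_isBigO {i j : ℕ} (c : ℂ) (h : j ≤ i) :
    (fun z => c * z ^ (-(i:ℤ))) =O[F S] bnd j :=
  (isBigO_const_mul_self c _ _).trans (bnd_isBigO_bnd S h)

lemma pp_isBigO_one (e : ℕ → ℂ) (T : ℕ) : (pp e T) =O[F S] (fun _ => (1:ℂ)) := by
  apply IsBigO.fun_sum
  intro k _
  exact (term_isBigO S (e k) (Nat.zero_le k)).trans (bnd_isBigO_one S 0)

lemma ExpW.isBigO_one {g e T} (h : ExpW S g e T) : g =O[F S] (fun _ => (1:ℂ)) := by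
  have : g = fun z => (g z - pp e T z) + pp e T z := by funext z; ring
  rw [this]
  exact (h.trans (bnd_isBigO_one S T)).add (pp_isBigO_one S e T)

lemma expw_congr {g g' e T} (hgg : g =ᶠ[F S] g') (h : ExpW S g e T) : ExpW S g' e T := by
  apply h.congr' _ EventuallyEq.rfl
  filter_upwards [hgg] with z hz
  rw [hz]

lemma expw_coeff_congr {g e e' T} (he : ∀ k < T, e k = e' k) (h : ExpW S g e T) :
    ExpW S g e' T := by
  have : pp e T = pp e' T := by
    funext z; exact Finset.sum_congr rfl fun k hk => by rw [he k (Finset.mem_range.1 hk)]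
  rwa [ExpW, ← this]

lemma expw_of_isBigO {g T} (h : g =O[F S] bnd T) : ExpW S g (fun _ => 0) T := by
  have : pp (fun _ => (0:ℂ)) T = fun _ => 0 := by funext z; simp [pp]
  rw [ExpW, this]
  simpa using h

lemma ExpW.add {g₁ g₂ e₁ e₂ T} (h₁ : ExpW S g₁ e₁ T) (h₂ : ExpW S g₂ e₂ T) :
    ExpW S (fun z => g₁ z + g₂ z) (fun k => e₁ k + e₂ k) T := by
  have : (fun z => (g₁ z + g₂ z) - pp (fun k => e₁ k + e₂ k) T z)
      = fun z => (g₁ z - pp e₁ T z) + (g₂ z - pp e₂ T z) := by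
    funext z; simp [pp, Finset.sum_add_distrib, add_mul]; ring
  rw [ExpW, this]
  exact Asymptotics.IsBigO.add h₁ h₂

lemma ExpW.const_mul {g e T} (c : ℂ) (h : ExpW S g e T) :
    ExpW S (fun z => c * g z) (fun k => c * e k) T := by
  have : (fun z => c * g z - pp (fun k => c * e k) T z)
      = fun z => c * (g z - pp e T z) := by
    funext z; simp [pp, Finset.mul_sum, mul_sub, mul_assoc]
  rw [ExpW, this]
  exact h.const_mul_left c

lemma expw_const (c : ℂ) (T : ℕ) :
    ExpW S (fun _ => c) (fun k => if k = 0 then c else 0) T := by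
  rcases Nat.eq_zero_or_pos T with hT | hT
  · subst hT
    simpa [ExpW, pp, show bnd 0 = fun _ : ℂ => (1:ℂ) from funext fun z => by simp [bnd]] using isBigO_const_const c (one_ne_zero : (1:ℂ) ≠ 0) (F S)
  · have : pp (fun k => if k = 0 then c else 0) T = fun _ => c := by
      funext z
      rw [pp, Finset.sum_eq_single 0]
      · simp
      · intro k _ hk; simp [hk]
      · intro h; exact absurd (Finset.mem_range.2 hT) h
    rw [ExpW, this]
    simpa using isBigO_zero (bnd T) (F S)
lemma expw_of_finsetSum {α : Type*} [DecidableEq α] (K : Finset α) (co : α → ℂ) (ι : α → ℕ)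
    (g : ℂ → ℂ) (T T' : ℕ) (hT : T ≤ T')
    (h : (fun z => g z - ∑ k ∈ K, co k * z ^ (-(ι k : ℤ))) =O[F S] bnd T') :
    ExpW S g (fun j => ∑ k ∈ K.filter fun k => ι k = j, co k) T := by
  classical
  rw [ExpW]
  have hpp : ∀ z : ℂ, pp (fun j => ∑ k ∈ K.filter fun k => ι k = j, co k) T z
      = ∑ k ∈ K.filter fun k => ι k ∈ Finset.range T, co k * z ^ (-(ι k : ℤ)) := by
    intro z
    rw [pp, ← Finset.sum_fiberwise_eq_sum_filter K (Finset.range T) ι (fun k => co k * z ^ (-(ι k : ℤ)))]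
    refine Finset.sum_congr rfl fun j _ => ?_
    rw [Finset.sum_mul]
    refine Finset.sum_congr rfl fun k hk => ?_
    rw [(Finset.mem_filter.1 hk).2]
  have hsplit : ∀ z : ℂ, g z - pp (fun j => ∑ k ∈ K.filter fun k => ι k = j, co k) T z
      = (g z - ∑ k ∈ K, co k * z ^ (-(ι k : ℤ)))
        + ∑ k ∈ K.filter fun k => ¬ (ι k ∈ Finset.range T), co k * z ^ (-(ι k : ℤ)) := by
    intro z
    rw [hpp z, ← Finset.sum_filter_add_sum_filter_not K (fun k => ι k ∈ Finset.range T)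
      (fun k => co k * z ^ (-(ι k : ℤ)))]
    ring
  have : (fun z => g z - pp (fun j => ∑ k ∈ K.filter fun k => ι k = j, co k) T z)
      = fun z => (g z - ∑ k ∈ K, co k * z ^ (-(ι k : ℤ)))
        + ∑ k ∈ K.filter fun k => ¬ (ι k ∈ Finset.range T), co k * z ^ (-(ι k : ℤ)) := by
    funext z; exact hsplit z
  rw [this]
  refine (h.trans (bnd_isBigO_bnd S hT)).add ?_
  apply Asymptotics.IsBigO.fun_sum
  intro k hk
  have : T ≤ ι k := by
    have := (Finset.mem_filter.1 hk).2
    simp only [Finset.mem_range, not_lt] at this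
    exact this
  exact term_isBigO S (co k) this

lemma Exp.mul {g₁ g₂ T} (h₁ : Exp S g₁ T) (h₂ : Exp S g₂ T) :
    Exp S (fun z => g₁ z * g₂ z) T := by
  classical
  obtain ⟨e₁, h₁⟩ := h₁
  obtain ⟨e₂, h₂⟩ := h₂
  have hO : (fun z => g₁ z * g₂ z -
      ∑ p ∈ Finset.range T ×ˢ Finset.range T, (e₁ p.1 * e₂ p.2) * z ^ (-((p.1 + p.2 : ℕ) : ℤ)))
      =O[F S] bnd T := by
    have key : (fun z => g₁ z * g₂ z - pp e₁ T z * pp e₂ T z)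
        =O[F S] bnd T := by
      have : (fun z => g₁ z * g₂ z - pp e₁ T z * pp e₂ T z)
          = fun z => (g₁ z - pp e₁ T z) * g₂ z + pp e₁ T z * (g₂ z - pp e₂ T z) := by
        funext z; ring
      rw [this]
      refine Asymptotics.IsBigO.add ?_ ?_
      · have := h₁.mul (ExpW.isBigO_one S h₂)
        simpa using this
      · have := (pp_isBigO_one S e₁ T).mul h₂
        have h' : (fun z => (fun _ : ℂ => (1:ℂ)) z * bnd T z) = bnd T := by
          funext z; simp
        rw [h'] at this
        simpa [mul_comm] using this
    apply key.congr' _ EventuallyEq.rfl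
    filter_upwards [eventually_F_ne S] with z hz
    have : pp e₁ T z * pp e₂ T z
        = ∑ p ∈ Finset.range T ×ˢ Finset.range T, (e₁ p.1 * e₂ p.2) * z ^ (-((p.1 + p.2 : ℕ) : ℤ)) := by
      rw [pp, pp, Finset.sum_mul_sum, ← Finset.sum_product']
      refine Finset.sum_congr rfl fun p _ => ?_
      have hz' : z ^ (-((p.1 + p.2 : ℕ) : ℤ)) = z ^ (-(p.1:ℤ)) * z ^ (-(p.2:ℤ)) := by
        rw [← zpow_add₀ hz]; congr 1; push_cast; ring
      rw [hz']; ring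
    rw [this]
  exact ⟨_, expw_of_finsetSum S _ _ _ _ T T le_rfl hO⟩
lemma zmul_zpow {z : ℂ} (hz : z ≠ 0) (i : ℤ) : z * z ^ i = z ^ (1 + i) := by
  rw [zpow_add₀ hz, zpow_one]

lemma tendsto_zpow_zero {k : ℕ} (hk : 1 ≤ k) :
    Filter.Tendsto (fun z : ℂ => z ^ (-(k:ℤ))) (F S) (nhds 0) := by
  have hf : ∀ z : ℂ, z ^ (-(k:ℤ)) = (z⁻¹) ^ k := by
    intro z; rw [zpow_neg, zpow_natCast, inv_pow]
  simp only [hf]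
  have hinv : Filter.Tendsto (fun z : ℂ => z⁻¹) (F S) (nhds 0) := by
    have h1 : Filter.Tendsto (fun z : ℂ => z⁻¹) (Bornology.cobounded ℂ) (nhds 0) :=
      tendsto_inv₀_cobounded
    exact h1.mono_left inf_le_left
  have := hinv.pow k
  rwa [zero_pow (by omega : k ≠ 0)] at this

lemma tendsto_bnd_zero {T : ℕ} (hT : 1 ≤ T) :
    Filter.Tendsto (bnd T) (F S) (nhds 0) := tendsto_zpow_zero S hT

lemma ExpW.tendsto_head {g e T} (h : ExpW S g e T) (hT : 1 ≤ T) :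
    Filter.Tendsto g (F S) (nhds (e 0)) := by
  have h1 : Filter.Tendsto (fun z => g z - pp e T z) (F S) (nhds 0) :=
    h.trans_tendsto (tendsto_bnd_zero S hT)
  have h2 : Filter.Tendsto (fun z => pp e T z) (F S) (nhds (e 0)) := by
    have : ∀ z, pp e T z = e 0 + ∑ k ∈ Finset.range (T - 1), e (k+1) * z ^ (-((k+1:ℕ):ℤ)) := by
      intro z
      rw [pp]
      have hT' : T = (T - 1) + 1 := by omega
      rw [hT', Finset.sum_range_succ']
      simp
      ring
    simp only [this]
    have : Filter.Tendsto (fun z : ℂ => ∑ k ∈ Finset.range (T - 1), e (k+1) * z ^ (-((k+1:ℕ):ℤ)))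
        (F S) (nhds 0) := by
      have := tendsto_finset_sum (Finset.range (T-1))
        (f := fun k (z : ℂ) => e (k+1) * z ^ (-((k+1:ℕ):ℤ))) (a := fun _ => (0:ℂ))
        (fun k _ => by simpa using (tendsto_zpow_zero S (k := k+1) (by omega)).const_mul (e (k+1)))
      simpa using this
    simpa using this.const_add (e 0)
  have := h1.add h2
  simpa using this

/-- Shift: multiply `g - e 0` by `z`. -/
lemma ExpW.shift {g e T} (h : ExpW S g e T) (hT : 1 ≤ T) :
    ExpW S (fun z => z * (g z - e 0)) (fun k => e (k+1)) (T - 1) := by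
  have key : (fun z => z * (g z - pp e T z)) =O[F S] bnd (T - 1) := by
    have hz : (fun z : ℂ => z * (g z - pp e T z)) =O[F S] fun z => z * bnd T z :=
      (isBigO_refl (fun z : ℂ => z) (F S)).mul h
    refine hz.trans ?_
    rw [isBigO_iff]
    refine ⟨1, ?_⟩
    filter_upwards [eventually_F_ne S, eventually_F_le S 1] with z hz0 hz1
    have : z * bnd T z = bnd (T-1) z := by
      rw [bnd, bnd, zmul_zpow hz0]
      congr 1
      omega
    rw [this, one_mul]
  apply key.congr' _ EventuallyEq.rfl
  filter_upwards [eventually_F_ne S] with z hz0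
  have hpp : pp (fun k => e (k+1)) (T-1) z = z * (pp e T z - e 0) := by
    rw [pp, pp]
    have hT' : T = (T - 1) + 1 := by omega
    rw [hT', Finset.sum_range_succ']
    simp only [Nat.cast_zero, neg_zero, zpow_zero, mul_one, Nat.add_sub_cancel]
    rw [add_sub_cancel_right, Finset.mul_sum]
    refine Finset.sum_congr rfl fun k _ => ?_
    have : z * z ^ (-((k+1:ℕ):ℤ)) = z ^ (-(k:ℤ)) := by
      rw [zmul_zpow hz0]
      congr 1
      omega
    rw [← mul_assoc, mul_comm z (e (k+1)), mul_assoc, this]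
  rw [hpp]
  ring

lemma ExpW.isBigO_bnd_one {g e T} (h : ExpW S g e T) (hT : 1 ≤ T) (h0 : e 0 = 0) :
    g =O[F S] bnd 1 := by
  have : g = fun z => (g z - pp e T z) + pp e T z := by funext z; ring
  rw [this]
  refine (h.trans (bnd_isBigO_bnd S hT)).add ?_
  have hpp : pp e T = fun z => ∑ k ∈ Finset.range T, e k * z ^ (-(k:ℤ)) := rfl
  rw [hpp]
  apply Asymptotics.IsBigO.fun_sum
  intro k hk
  rcases Nat.eq_zero_or_pos k with rfl | hkpos
  · simp only [h0]
    simpa using isBigO_zero (bnd 1) (F S)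
  · exact term_isBigO S (e k) hkpos

lemma Exp.add_isBigO {g g₁ T} (h₁ : Exp S g₁ T) (hr : (fun z => g z - g₁ z) =O[F S] bnd T) :
    Exp S g T := by
  obtain ⟨e, he⟩ := h₁
  refine ⟨e, ?_⟩
  have : (fun z => g z - pp e T z) = fun z => (g z - g₁ z) + (g₁ z - pp e T z) := by
    funext z; ring
  rw [ExpW, this]
  exact hr.add he

lemma Exp.pow {g T} (h : Exp S g T) : ∀ n : ℕ, 1 ≤ n → Exp S (fun z => g z ^ n) T := by
  intro n hn
  induction n with
  | zero => omega
  | succ m ih =>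
    rcases Nat.eq_zero_or_pos m with rfl | hm
    · simpa [pow_one] using h
    · have hmul := Exp.mul S (ih hm) h
      have he : (fun z => g z ^ m * g z) = fun z => g z ^ (m+1) := by
        funext z; rw [pow_succ]
      rwa [he] at hmul
lemma Exp.zero_fun (T : ℕ) : Exp S (fun _ => (0:ℂ)) T :=
  ⟨_, expw_const S 0 T⟩

lemma Exp.const (c : ℂ) (T : ℕ) : Exp S (fun _ => c) T :=
  ⟨_, expw_const S c T⟩

lemma Exp.add {g₁ g₂ T} (h₁ : Exp S g₁ T) (h₂ : Exp S g₂ T) :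
    Exp S (fun z => g₁ z + g₂ z) T := by
  obtain ⟨e₁, h₁⟩ := h₁; obtain ⟨e₂, h₂⟩ := h₂
  exact ⟨_, ExpW.add S h₁ h₂⟩

lemma Exp.const_mul {g T} (c : ℂ) (h : Exp S g T) : Exp S (fun z => c * g z) T := by
  obtain ⟨e, h⟩ := h; exact ⟨_, ExpW.const_mul S c h⟩

lemma Exp.finsetSum {ι : Type*} (K : Finset ι) (f : ι → ℂ → ℂ) (T : ℕ)
    (h : ∀ i ∈ K, Exp S (f i) T) : Exp S (fun z => ∑ i ∈ K, f i z) T := by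
  classical
  induction K using Finset.induction_on with
  | empty => simpa using Exp.zero_fun S T
  | insert i K' hni ih =>
    have : (fun z => ∑ j ∈ insert i K', f j z) = fun z => f i z + ∑ j ∈ K', f j z := by
      funext z; rw [Finset.sum_insert hni]
    rw [this]
    exact Exp.add S (h i (Finset.mem_insert_self i K'))
      (ih fun j hj => h j (Finset.mem_insert_of_mem hj))

lemma Exp.congr {g g' T} (hgg : g =ᶠ[F S] g') (h : Exp S g T) : Exp S g' T := by
  obtain ⟨e, h⟩ := h; exact ⟨e, expw_congr S hgg h⟩

lemma Exp.inv {g e T} (h : ExpW S g e T) (hT : 1 ≤ T) (h0 : e 0 ≠ 0) :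
    Exp S (fun z => (g z)⁻¹) T := by
  set c := e 0 with hc
  set hf := fun z => (c - g z) / c with hhf
  have hexp0 : ExpW S (fun z => (-(1/c)) * g z + 1)
      (fun k => (-(1/c)) * e k + (if k = 0 then 1 else 0)) T :=
    ExpW.add S (ExpW.const_mul S (-(1/c)) h) (expw_const S 1 T)
  have hfeq : ∀ z, hf z = (-(1/c)) * g z + 1 := by
    intro z; rw [hhf]; field_simp; ring
  have hexp : ExpW S hf (fun k => (-(1/c)) * e k + (if k = 0 then 1 else 0)) T := by
    have : (fun z => (-(1/c)) * g z + 1) = hf := by funext z; rw [hfeq z]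
    rwa [this] at hexp0
  have hcoeff0 : (-(1/c)) * e 0 + (if (0:ℕ) = 0 then (1:ℂ) else 0) = 0 := by
    simp only [if_pos rfl, ← hc, ↓reduceIte]
    field_simp
    norm_num
  have hsmall : hf =O[F S] bnd 1 := hexp.isBigO_bnd_one S hT hcoeff0
  have hpowT : (fun z => hf z ^ T) =O[F S] bnd T := by
    have := hsmall.pow T
    apply this.trans
    rw [isBigO_iff]
    refine ⟨1, ?_⟩
    filter_upwards [eventually_F_ne S] with z hz0
    have : bnd 1 z ^ T = bnd T z := by
      rw [bnd, bnd]
      have e1 : z ^ (-((1:ℕ):ℤ)) = z⁻¹ := by norm_num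
      rw [e1, inv_pow, ← zpow_natCast z T, ← zpow_neg]
    rw [this, one_mul]
  have htend : Filter.Tendsto g (F S) (nhds c) := h.tendsto_head S hT
  have hginv : (fun z => (g z)⁻¹) =O[F S] (fun _ => (1:ℂ)) :=
    (htend.inv₀ h0).isBigO_one ℂ
  have hrem : (fun z => hf z ^ T * (g z)⁻¹) =O[F S] bnd T := by
    have := hpowT.mul hginv
    simpa using this
  have hsum : Exp S (fun z => (1/c) * ∑ j ∈ Finset.range T, hf z ^ j) T := by
    apply Exp.const_mul
    apply Exp.finsetSum
    intro j _
    rcases Nat.eq_zero_or_pos j with rfl | hj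
    · simpa using Exp.const S 1 T
    · exact Exp.pow S ⟨_, hexp⟩ j hj
  have hmain : Exp S (fun z => (1/c) * ∑ j ∈ Finset.range T, hf z ^ j
      + hf z ^ T * (g z)⁻¹) T :=
    Exp.add_isBigO S hsum (by simpa using hrem)
  apply Exp.congr S _ hmain
  filter_upwards [htend.eventually_ne h0] with z hgz
  have hc0 : c ≠ 0 := h0
  have h2 : (∑ j ∈ Finset.range T, hf z ^ j) * (hf z - 1) = hf z ^ T - 1 :=
    geom_sum_mul (hf z) T
  have h1 : hf z - 1 = -(g z) / c := by
    rw [hhf]; field_simp; ring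
  rw [h1] at h2
  have key : (1/c) * ∑ j ∈ Finset.range T, hf z ^ j + hf z ^ T * (g z)⁻¹ = (g z)⁻¹ := by
    field_simp [hgz, hc0] at h2 ⊢
    linear_combination -h2
  rw [key]
lemma hyp_to_O {g : ℂ → ℂ} {E : ℕ} {B₀ R₀ : ℝ}
    (h : ∀ z ∈ S, R₀ ≤ ‖z‖ → ‖(g z)‖ * ‖z‖ ^ E ≤ B₀) :
    g =O[F S] bnd E := by
  rw [isBigO_iff]
  refine ⟨B₀, ?_⟩
  filter_upwards [eventually_F_mem S, eventually_F_le S R₀, eventually_F_le S 1]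
    with z hzS hzR hz1
  have hb := h z hzS hzR
  have hpos : (0:ℝ) < ‖z‖ ^ E := by positivity
  have hnorm : ‖bnd E z‖ = (‖z‖ ^ E)⁻¹ := by
    rw [bnd, norm_zpow, zpow_neg, zpow_natCast]
  rw [hnorm, le_mul_inv_iff₀ hpos]
  linarith [hb]

lemma isBigO_bnd_pow {g : ℂ → ℂ} (h : g =O[F S] bnd 1) (n : ℕ) :
    (fun z => g z ^ n) =O[F S] bnd n := by
  refine (h.pow n).trans ?_
  rw [isBigO_iff]
  refine ⟨1, ?_⟩
  filter_upwards [eventually_F_ne S] with z hz0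
  have : bnd 1 z ^ n = bnd n z := by
    rw [bnd, bnd]
    have e1 : z ^ (-((1:ℕ):ℤ)) = z⁻¹ := by norm_num
    rw [e1, inv_pow, ← zpow_natCast z n, ← zpow_neg]
  rw [this, one_mul]

end Stmt8
end

open Stmt8 Asymptotics

theorem stmt_8' (L' M' N : ℕ) (hL' : 0 < L') (hM' : 0 < M') (hNodd : Odd N)
    (h2M : 2 * M' < L') (hN3 : 3 ≤ N) (hNM : N ≤ M')
    (S : Set ℂ) (hS : ∀ z ∈ S, 0 < z.re) (hSu : ¬ Bornology.IsBounded S)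
    (u₁ u₂ : ℂ → ℂ) (a b : ℕ → ℝ) (B₀ R₀ : ℝ)
    (hu₁ : ∀ z ∈ S, R₀ ≤ ‖z‖ →
      ‖(2 * z * u₁ z -
          (1 + ∑ k ∈ Finset.Icc 1 M', (a k : ℂ) * z ^ (-(2 * k : ℤ))))‖ *
        ‖z‖ ^ L' ≤ B₀)
    (d : ℕ → ℝ) (hdN : d N ≠ 0)
    (hd : ∀ z ∈ S, R₀ ≤ ‖z‖ →
      ‖((1 + 4 * u₁ z * u₂ z) -
          (-∑ k ∈ Finset.Icc N M', (d k : ℂ) * z ^ (-(2 * k : ℤ))))‖ *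
        ‖z‖ ^ (L' + N) ≤ B₀)
    (s : ℂ → ℂ) (hs : ∀ z ∈ S, s z ^ 2 = 1 + 4 * u₁ z * u₂ z)
    (l : ℂ)
    (hsl : Filter.Tendsto (fun z => z ^ N * s z) (Bornology.cobounded ℂ ⊓ Filter.principal S) (nhds l)) :
    ∃ (c : ℕ → ℂ) (B R : ℝ), ∀ z ∈ S, R ≤ ‖z‖ →
      ‖((1 + s z) / (2 * u₁ z) -
          (z + ∑ k ∈ Finset.Icc 1 (L' / 2 - 1), c k * z ^ (-(k : ℤ))))‖ *
        ‖z‖ ^ (L' / 2) ≤ B := by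
  classical
  haveI : (F S).NeBot := F_neBot S hSu
  -- arithmetic
  set T : ℕ := L' / 2 + 1 with hTdef
  have hML : M' ≤ L' / 2 := by omega
  have hNL : N ≤ L' / 2 := le_trans hNM hML
  have hTL : T ≤ L' := by omega
  set Tt : ℕ := T - N with hTtdef
  have hTt1 : 1 ≤ Tt := by omega
  have hTtN : Tt + N = T := by omega
  have hTtL : Tt ≤ L' - N := by omega
  have hT2 : 2 ≤ T := by omega
  -- the function f = 2 z u₁
  set f : ℂ → ℂ := fun z => 2 * z * u₁ z with hfdef
  have hOf : (fun z => f z -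
      (1 + ∑ k ∈ Finset.Icc 1 M', (a k : ℂ) * z ^ (-(2 * k : ℤ)))) =O[F S] bnd L' :=
    hyp_to_O S hu₁
  have hfW : ExpW S f
      (fun j => ∑ k ∈ (insert 0 (Finset.Icc 1 M')).filter fun k => 2*k = j,
        (if k = 0 then 1 else (a k : ℂ))) T := by
    apply expw_of_finsetSum S _ _ _ _ T L' hTL
    apply hOf.congr' _ EventuallyEq.rfl
    apply Filter.Eventually.of_forall
    intro z
    have : ∑ k ∈ insert 0 (Finset.Icc 1 M'),
        (if k = 0 then 1 else (a k : ℂ)) * z ^ (-((2*k : ℕ) : ℤ))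
        = 1 + ∑ k ∈ Finset.Icc 1 M', (a k : ℂ) * z ^ (-(2 * k : ℤ)) := by
      rw [Finset.sum_insert (by simp)]
      simp only [if_pos rfl, Nat.mul_zero, Nat.cast_zero, neg_zero, zpow_zero, mul_one]
      congr 1
      refine Finset.sum_congr rfl fun k hk => ?_
      have : k ≠ 0 := by
        have := (Finset.mem_Icc.1 hk).1; omega
      rw [if_neg this]
      norm_cast
    simp only [this]
  set ef : ℕ → ℂ := fun j => ∑ k ∈ (insert 0 (Finset.Icc 1 M')).filter fun k => 2*k = j,
    (if k = 0 then 1 else (a k : ℂ)) with hefdef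
  have hef0 : ef 0 = 1 := by
    have h01 : (insert 0 (Finset.Icc 1 M')).filter (fun k => k = 0) = {0} := by
      ext k; simp [Finset.mem_Icc]; omega
    simp [hefdef, h01]
  have hftend : Filter.Tendsto f (F S) (nhds 1) := by
    have := hfW.tendsto_head S (by omega)
    rwa [hef0] at this
  -- the function t = z^N s z
  set t : ℂ → ℂ := fun z => z ^ N * s z with htdef
  have htl : Filter.Tendsto t (F S) (nhds l) := hsl
  -- expansion of t²
  have hOd : (fun z => (1 + 4 * u₁ z * u₂ z) -
      (-∑ k ∈ Finset.Icc N M', (d k : ℂ) * z ^ (-(2 * k : ℤ)))) =O[F S] bnd (L' + N) :=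
    hyp_to_O S hd
  have ht2W : ExpW S (fun z => t z ^ 2)
      (fun j => ∑ k ∈ (Finset.Icc N M').filter fun k => 2*(k-N) = j, (-(d k : ℂ))) Tt := by
    apply expw_of_finsetSum S _ _ _ _ Tt (L' - N) hTtL
    have hbig := (isBigO_refl (fun z : ℂ => z ^ (2*N)) (F S)).mul hOd
    have hrhs : (fun z : ℂ => z ^ (2*N) * bnd (L' + N) z) =O[F S] bnd (L' - N) := by
      rw [isBigO_iff]
      refine ⟨1, ?_⟩
      filter_upwards [eventually_F_ne S] with z hz0
      have : z ^ (2*N) * bnd (L' + N) z = bnd (L' - N) z := by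
        rw [bnd, bnd, ← zpow_natCast z (2*N), ← zpow_add₀ hz0]
        congr 1
        omega
      rw [this, one_mul]
    refine (hbig.trans hrhs).congr' ?_ EventuallyEq.rfl
    filter_upwards [eventually_F_ne S, eventually_F_mem S] with z hz0 hzS
    have h1 : z ^ (2*N) * (1 + 4 * u₁ z * u₂ z) = t z ^ 2 := by
      rw [← hs z hzS]
      simp only [htdef]
      rw [mul_pow, ← pow_mul, mul_comm N 2]
    have h2 : z ^ (2*N) * (∑ k ∈ Finset.Icc N M', (d k : ℂ) * z ^ (-(2 * k : ℤ)))
        = -∑ k ∈ Finset.Icc N M', (-(d k : ℂ)) * z ^ (-((2*(k-N) : ℕ) : ℤ)) := by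
      rw [Finset.mul_sum, ← Finset.sum_neg_distrib]
      refine Finset.sum_congr rfl fun k hk => ?_
      have hkN : N ≤ k := (Finset.mem_Icc.1 hk).1
      have : z ^ (2*N) * z ^ (-(2 * k : ℤ)) = z ^ (-((2*(k-N) : ℕ) : ℤ)) := by
        rw [← zpow_natCast z (2*N), ← zpow_add₀ hz0]
        congr 1
        omega
      calc z ^ (2*N) * ((d k : ℂ) * z ^ (-(2 * k : ℤ)))
          = (d k : ℂ) * (z ^ (2*N) * z ^ (-(2 * k : ℤ))) := by ring
        _ = -((-(d k : ℂ)) * z ^ (-((2*(k-N) : ℕ) : ℤ))) := by rw [this]; ring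
    calc z ^ (2*N) * ((1 + 4 * u₁ z * u₂ z)
          - (-∑ k ∈ Finset.Icc N M', (d k : ℂ) * z ^ (-(2 * k : ℤ))))
        = z ^ (2*N) * (1 + 4 * u₁ z * u₂ z)
          + z ^ (2*N) * (∑ k ∈ Finset.Icc N M', (d k : ℂ) * z ^ (-(2 * k : ℤ))) := by ring
      _ = t z ^ 2 - ∑ k ∈ Finset.Icc N M', (-(d k : ℂ)) * z ^ (-((2*(k-N) : ℕ) : ℤ)) := by
          rw [h1, h2]; ring
  set et2 : ℕ → ℂ := fun j => ∑ k ∈ (Finset.Icc N M').filter fun k => 2*(k-N) = j,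
    (-(d k : ℂ)) with het2def
  have het20 : et2 0 = -(d N : ℂ) := by
    have hfil : (Finset.Icc N M').filter (fun k => 2*(k-N) = 0) = {N} := by
      ext k; simp [Finset.mem_Icc]; omega
    simp only [het2def, hfil, Finset.sum_singleton]
  have hl2 : l ^ 2 = -(d N : ℂ) := by
    have h1 : Filter.Tendsto (fun z => t z ^ 2) (F S) (nhds (l ^ 2)) := htl.pow 2
    have h2 : Filter.Tendsto (fun z => t z ^ 2) (F S) (nhds (et2 0)) :=
      ht2W.tendsto_head S hTt1
    rw [het20] at h2
    exact tendsto_nhds_unique h1 h2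
  have hl0 : l ≠ 0 := by
    intro h
    rw [h, zero_pow two_ne_zero] at hl2
    have : (d N : ℂ) = 0 := by linear_combination hl2
    exact hdN (by exact_mod_cast this)
    -- expansion of x = t²/l² - 1
  have hxW : ExpW S (fun z => (1/l^2) * (t z ^ 2) + (-1))
      (fun k => (1/l^2) * et2 k + (if k = 0 then -1 else 0)) Tt :=
    ExpW.add S (ExpW.const_mul S (1/l^2) ht2W) (expw_const S (-1) Tt)
  set x : ℂ → ℂ := fun z => (1/l^2) * (t z ^ 2) + (-1) with hxdef
  set ex : ℕ → ℂ := fun k => (1/l^2) * et2 k + (if k = 0 then -1 else 0) with hexdef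
  have hl20 : l^2 ≠ 0 := pow_ne_zero 2 hl0
  have hex0 : ex 0 = 0 := by
    simp only [hexdef, het20, if_pos rfl, ← hl2, ↓reduceIte]
    field_simp
    ring
  have hx1 : x =O[F S] bnd 1 := hxW.isBigO_bnd_one S hTt1 hex0
  have hx0 : Filter.Tendsto x (F S) (nhds 0) :=
    hx1.trans_tendsto (tendsto_bnd_zero S le_rfl)
  -- the analytic square root
  set f₀ : ℂ → ℂ := fun y => (1 + y) ^ ((1:ℂ)/2) with hf₀def
  have hA : AnalyticAt ℂ f₀ 0 := by
    apply AnalyticAt.cpow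
    · exact analyticAt_const.add analyticAt_id
    · exact analyticAt_const
    · simp [Complex.slitPlane]
  obtain ⟨p, hp⟩ := hA
  have hrem0 := hp.isBigO_sub_partialSum_pow Tt
  have hcomp : (fun z => f₀ (0 + x z) - p.partialSum Tt (x z)) =O[F S]
      fun z => ‖x z‖ ^ Tt := hrem0.comp_tendsto hx0
  have hnorm : (fun z => (‖x z‖ ^ Tt : ℝ)) =O[F S] bnd Tt := by
    have h1 : (fun z => x z ^ Tt) =O[F S] bnd Tt := isBigO_bnd_pow S hx1 Tt
    calc (fun z => (‖x z‖ ^ Tt : ℝ)) =O[F S] (fun z => x z ^ Tt) := by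
          rw [isBigO_iff]
          exact ⟨1, Filter.Eventually.of_forall fun z => by simp [norm_pow]⟩
      _ =O[F S] bnd Tt := h1
  have hps : Exp S (fun z => p.partialSum Tt (x z)) Tt := by
    have hform : (fun z => p.partialSum Tt (x z))
        = fun z => ∑ k ∈ Finset.range Tt, p.coeff k * x z ^ k := by
      funext z
      rw [FormalMultilinearSeries.partialSum]
      refine Finset.sum_congr rfl fun k _ => ?_
      rw [p.apply_eq_pow_smul_coeff, smul_eq_mul]
      ring
    rw [hform]
    apply Exp.finsetSum
    intro k _
    rcases Nat.eq_zero_or_pos k with rfl | hk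
    · simpa using Exp.const S (p.coeff 0) Tt
    · exact Exp.const_mul S (p.coeff k) (Exp.pow S ⟨ex, hxW⟩ k hk)
  have hw0Exp : Exp S (fun z => f₀ (x z)) Tt := by
    apply Exp.add_isBigO S hps
    have heq : (fun z => f₀ (x z) - p.partialSum Tt (x z))
        = fun z => f₀ (0 + x z) - p.partialSum Tt (x z) := by
      funext z; rw [zero_add]
    rw [heq]
    exact hcomp.trans hnorm
  have hf₀cont : Filter.Tendsto (fun z => f₀ (x z)) (F S) (nhds 1) := by
    have hc : ContinuousAt f₀ 0 := hp.continuousAt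
    have h10 : f₀ 0 = 1 := by
      simp only [hf₀def, add_zero]
      exact Complex.one_cpow _
    have := hc.tendsto.comp hx0
    rwa [h10] at this
  -- t = l * f₀ ∘ x eventually
  have hkey : ∀ᶠ z in F S, t z = l * f₀ (x z) := by
    have htne : ∀ᶠ z in F S, t z ≠ 0 := htl.eventually_ne hl0
    have hsum : Filter.Tendsto (fun z => t z + l * f₀ (x z)) (F S) (nhds (l + l * 1)) :=
      htl.add (hf₀cont.const_mul l)
    have h2l : l + l * 1 ≠ 0 := by
      intro hh
      apply hl0
      have h2 : (2:ℂ) * l = 0 := by linear_combination hh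
      exact (mul_eq_zero.1 h2).resolve_left two_ne_zero
    have hsne : ∀ᶠ z in F S, t z + l * f₀ (x z) ≠ 0 := hsum.eventually_ne h2l
    filter_upwards [htne, hsne] with z ht0 hs0
    have h1x : 1 + x z = t z ^ 2 / l ^ 2 := by
      simp only [hxdef]; field_simp; ring
    have h1xne : (1 + x z) ≠ 0 := by
      rw [h1x]; exact div_ne_zero (pow_ne_zero 2 ht0) hl20
    have hsq : f₀ (x z) ^ 2 = 1 + x z := by
      simp only [hf₀def]
      rw [sq, ← Complex.cpow_add _ _ h1xne]
      norm_num
    have hw2 : (l * f₀ (x z)) ^ 2 = t z ^ 2 := by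
      rw [mul_pow, hsq, h1x]
      field_simp
    have hfactor : (t z - l * f₀ (x z)) * (t z + l * f₀ (x z)) = 0 := by
      linear_combination -hw2
    rcases mul_eq_zero.1 hfactor with h | h
    · linear_combination h
    · exact absurd h hs0
  have htExp : Exp S t Tt := by
    refine Exp.congr S ?_ (Exp.const_mul S l hw0Exp)
    filter_upwards [hkey] with z hz
    exact hz.symm
  obtain ⟨et, htW⟩ := htExp
  -- expansion of s to order T
  have hsE : ∃ es, ExpW S s es T := by
    refine ⟨_, expw_of_finsetSum S (Finset.range Tt) et (fun k => k + N) s T T le_rfl ?_⟩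
    have hmul := (isBigO_refl (fun z : ℂ => z ^ (-(N:ℤ))) (F S)).mul htW
    have hrhs : (fun z : ℂ => z ^ (-(N:ℤ)) * bnd Tt z) =O[F S] bnd T := by
      rw [isBigO_iff]
      refine ⟨1, ?_⟩
      filter_upwards [eventually_F_ne S] with z hz0
      have : z ^ (-(N:ℤ)) * bnd Tt z = bnd T z := by
        rw [bnd, bnd, ← zpow_add₀ hz0]
        congr 1
        omega
      rw [this, one_mul]
    refine (hmul.trans hrhs).congr' ?_ EventuallyEq.rfl
    filter_upwards [eventually_F_ne S] with z hz0
    have hts : z ^ (-(N:ℤ)) * t z = s z := by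
      simp only [htdef]
      rw [← mul_assoc, ← zpow_natCast z N, ← zpow_add₀ hz0]
      simp
    have hterm : ∀ k, z ^ (-(N:ℤ)) * (et k * z ^ (-(k:ℤ)))
        = et k * z ^ (-((k + N : ℕ) : ℤ)) := by
      intro k
      rw [← mul_assoc, mul_comm (z ^ (-(N:ℤ))) (et k), mul_assoc, ← zpow_add₀ hz0]
      congr 2
      omega
    calc z ^ (-(N:ℤ)) * (t z - pp et Tt z)
        = z ^ (-(N:ℤ)) * t z - ∑ k ∈ Finset.range Tt, z ^ (-(N:ℤ)) * (et k * z ^ (-(k:ℤ))) := by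
          rw [pp, mul_sub, Finset.mul_sum]
      _ = s z - ∑ k ∈ Finset.range Tt, et k * z ^ (-((k + N : ℕ) : ℤ)) := by
          rw [hts]
          congr 1
          exact Finset.sum_congr rfl fun k _ => hterm k
  obtain ⟨es, hsW⟩ := hsE
  -- w = (1+s)/f
  have h1s : ExpW S (fun z => 1 + s z)
      (fun k => (if k = 0 then 1 else 0) + es k) T :=
    ExpW.add S (expw_const S 1 T) hsW
  have hfinv : Exp S (fun z => (f z)⁻¹) T :=
    Exp.inv S hfW (by omega) (by rw [hef0]; exact one_ne_zero)
  have hwE : Exp S (fun z => (1 + s z) * (f z)⁻¹) T := Exp.mul S ⟨_, h1s⟩ hfinv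
  obtain ⟨ew, hwW⟩ := hwE
  set w : ℂ → ℂ := fun z => (1 + s z) * (f z)⁻¹ with hwdef
  -- limits
  have hstend : Filter.Tendsto s (F S) (nhds 0) := by
    have h1 : Filter.Tendsto (fun z => z ^ (-(N:ℤ)) * t z) (F S) (nhds (0 * l)) :=
      (tendsto_zpow_zero S (by omega)).mul htl
    rw [zero_mul] at h1
    apply h1.congr'
    filter_upwards [eventually_F_ne S] with z hz0
    simp only [htdef]
    rw [← mul_assoc, ← zpow_natCast z N, ← zpow_add₀ hz0]
    simp
  have hfinvtend : Filter.Tendsto (fun z => (f z)⁻¹) (F S) (nhds 1) := by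
    have := hftend.inv₀ one_ne_zero
    rwa [inv_one] at this
  have hwtend : Filter.Tendsto w (F S) (nhds 1) := by
    have h1 : Filter.Tendsto (fun z => (1:ℂ) + s z) (F S) (nhds (1 + 0)) :=
      Filter.Tendsto.add tendsto_const_nhds hstend
    have h2 := h1.mul hfinvtend
    simpa using h2
  have hew0 : ew 0 = 1 :=
    tendsto_nhds_unique (hwW.tendsto_head S (by omega)) hwtend
  have hef1 : ef 1 = 0 := by
    have hfil : (insert 0 (Finset.Icc 1 M')).filter (fun k => 2*k = 1) = ∅ := by
      ext k
      simp only [Finset.mem_filter, Finset.mem_insert, Finset.mem_Icc, Finset.notMem_empty,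
        iff_false, not_and]
      omega
    simp [hefdef, hfil]
  have hew1 : ew 1 = 0 := by
    have hshift := hwW.shift S (by omega)
    have hlim1 : Filter.Tendsto (fun z => z * (w z - ew 0)) (F S) (nhds (ew 1)) :=
      hshift.tendsto_head S (by omega)
    have hzs : Filter.Tendsto (fun z => z * s z) (F S) (nhds 0) := by
      have h1 : Filter.Tendsto (fun z => z ^ (-((N-1:ℕ):ℤ)) * t z) (F S) (nhds (0 * l)) :=
        (tendsto_zpow_zero S (by omega)).mul htl
      rw [zero_mul] at h1
      apply h1.congr'
      filter_upwards [eventually_F_ne S] with z hz0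
      simp only [htdef]
      rw [← mul_assoc, ← zpow_natCast z N, ← zpow_add₀ hz0]
      have : (-((N-1:ℕ):ℤ) + (N:ℤ)) = 1 := by omega
      rw [this, zpow_one]
    have hzf : Filter.Tendsto (fun z => z * (f z - 1)) (F S) (nhds 0) := by
      have hshf := hfW.shift S (by omega)
      have := hshf.tendsto_head S (by omega)
      rw [hef1] at this
      rwa [hef0] at this
    have hdirect : Filter.Tendsto (fun z => z * (w z - ew 0)) (F S) (nhds 0) := by
      have hcomb : Filter.Tendsto
          (fun z => (z * s z) * (f z)⁻¹ - (z * (f z - 1)) * (f z)⁻¹) (F S)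
          (nhds (0 * 1 - 0 * 1)) := (hzs.mul hfinvtend).sub (hzf.mul hfinvtend)
      norm_num at hcomb
      apply hcomb.congr'
      filter_upwards [hftend.eventually_ne one_ne_zero] with z hfz0
      rw [hew0]
      simp only [hwdef]
      field_simp
      ring
    exact tendsto_nhds_unique hlim1 hdirect
  -- conclusion
  have hm : (fun z => z * (w z - ew 0) - pp (fun k => ew (k+1)) (T-1) z) =O[F S] bnd (T-1) :=
    hwW.shift S (by omega)
  obtain ⟨C, hC⟩ := isBigO_iff.1 hm
  refine ⟨fun k => ew (k+1), C, ?_⟩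
  rw [← eventually_F_iff]
  filter_upwards [hC, eventually_F_ne S, hftend.eventually_ne one_ne_zero,
    eventually_F_le S 1] with z hCz hz0 hfz0 hz1
  have hu0 : u₁ z ≠ 0 := by
    intro hu
    apply hfz0
    simp [hfdef, hu]
  have hzw : z * (w z - ew 0) = (1 + s z)/(2*u₁ z) - z := by
    rw [hew0]
    simp only [hwdef, hfdef]
    field_simp
  have hppeq : pp (fun k => ew (k+1)) (T-1) z
      = ∑ k ∈ Finset.Icc 1 (L'/2 - 1), ew (k+1) * z ^ (-(k:ℤ)) := by
    rw [pp]
    have hT1 : T - 1 = (T-2) + 1 := by omega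
    rw [hT1, Finset.sum_range_succ']
    simp only [Nat.cast_zero, neg_zero, zpow_zero, mul_one]
    rw [hew1, add_zero, ← Finset.Ico_add_one_right_eq_Icc, Finset.sum_Ico_eq_sum_range]
    have hrange : L'/2 - 1 + 1 - 1 = T - 2 := by omega
    rw [hrange]
    refine Finset.sum_congr rfl fun i _ => ?_
    have h1i : 1 + i = i + 1 := by omega
    rw [h1i]
  have hid : z * (w z - ew 0) - pp (fun k => ew (k+1)) (T-1) z
      = (1 + s z)/(2*u₁ z) - (z + ∑ k ∈ Finset.Icc 1 (L'/2 - 1), ew (k+1) * z ^ (-(k:ℤ))) := by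
    rw [hzw, hppeq]; ring
  rw [hid] at hCz
  have hbnd : ‖bnd (T-1) z‖ = (‖z‖ ^ (T-1))⁻¹ := by
    rw [bnd, norm_zpow, zpow_neg, zpow_natCast]
  rw [hbnd] at hCz
  have hT1L : T - 1 = L'/2 := by omega
  have hpos : (0:ℝ) < ‖z‖ ^ (L'/2) := by positivity
  calc ‖((1 + s z) / (2 * u₁ z) -
          (z + ∑ k ∈ Finset.Icc 1 (L' / 2 - 1), ew (k+1) * z ^ (-(k : ℤ))))‖ *
        ‖z‖ ^ (L' / 2)
      ≤ (C * (‖z‖ ^ (T-1))⁻¹) * ‖z‖ ^ (L'/2) := by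
        apply mul_le_mul_of_nonneg_right hCz (le_of_lt hpos)
    _ = C := by
        rw [hT1L]
        field_simp


/-- Given asymptotic expansions
`u₁(z) = (2z)⁻¹(1 + Σ a_k z^{−2k} + O(z^{−L′}))`,
`u₂(z) = −(z/2)(1 + Σ b_k z^{−2k} + O(z^{−L′}))` and
`1 + 4u₁u₂ = −Σ_{k=N}^{M′} d_k z^{−2k} + O(z^{−L′−N})` with `d_N ≠ 0` along an
unbounded set `S` in the right half-plane, and a square root `s` of `1 + 4u₁u₂` such
that `z^N s(z)` converges at infinity along `S`, the function
`m(z) = (1 + s(z))/(2u₁(z))` has an asymptotic expansion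
`m(z) = z + Σ_{k=1}^{L−2} c_k z^{−k} + O(z^{−L+1})` with `L = 1 + ⌊L′/2⌋`. -/
theorem stmt_8 (L' M' N : ℕ) (hL' : 0 < L') (hM' : 0 < M') (hNodd : Odd N)
    (h2M : 2 * M' < L') (hN3 : 3 ≤ N) (hNM : N ≤ M')
    (S : Set ℂ) (hS : ∀ z ∈ S, 0 < z.re) (hSu : ¬ Bornology.IsBounded S)
    (u₁ u₂ : ℂ → ℂ) (a b : ℕ → ℝ) (B₀ R₀ : ℝ)
    (hu₁ : ∀ z ∈ S, R₀ ≤ ‖z‖ →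
      ‖(2 * z * u₁ z -
          (1 + ∑ k ∈ Finset.Icc 1 M', (a k : ℂ) * z ^ (-(2 * k : ℤ))))‖ *
        ‖z‖ ^ L' ≤ B₀)
    (hu₂ : ∀ z ∈ S, R₀ ≤ ‖z‖ →
      ‖((-2) * u₂ z / z -
          (1 + ∑ k ∈ Finset.Icc 1 M', (b k : ℂ) * z ^ (-(2 * k : ℤ))))‖ *
        ‖z‖ ^ L' ≤ B₀)
    (d : ℕ → ℝ) (hdN : d N ≠ 0)
    (hd : ∀ z ∈ S, R₀ ≤ ‖z‖ →
      ‖((1 + 4 * u₁ z * u₂ z) -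
          (-∑ k ∈ Finset.Icc N M', (d k : ℂ) * z ^ (-(2 * k : ℤ))))‖ *
        ‖z‖ ^ (L' + N) ≤ B₀)
    (s : ℂ → ℂ) (hs : ∀ z ∈ S, s z ^ 2 = 1 + 4 * u₁ z * u₂ z)
    (l : ℂ)
    (hsl : Tendsto (fun z => z ^ N * s z) (Bornology.cobounded ℂ ⊓ 𝓟 S) (nhds l)) :
    ∃ (c : ℕ → ℂ) (B R : ℝ), ∀ z ∈ S, R ≤ ‖z‖ →
      ‖((1 + s z) / (2 * u₁ z) -
          (z + ∑ k ∈ Finset.Icc 1 (L' / 2 - 1), c k * z ^ (-(k : ℤ))))‖ *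
        ‖z‖ ^ (L' / 2) ≤ B :=
  stmt_8' L' M' N hL' hM' hNodd h2M hN3 hNM S hS hSu u₁ u₂ a b B₀ R₀ hu₁ d hdN hd s hs l hsl
end

section
/- Let b > 0 and z ∈ ℂ with Im(z²) ≠ 0, let q : [0, b] → ℝ be continuous, and let m : [0, b] → ℂ be continuously differentiable with Im m(x) > 0 for every x ∈ [0, b], satisfying the Riccati equation m′(x) = −z² − q(x) + m(x)². Define f(x) = exp(−∫₀ˣ m(y) dy). Then ∫₀^b |f(x)|² dx = (Im m(0)/Im(z²)) · (1 − exp(−∫₀^b Im(z²)/Im m(y) dy)). In particular, if Im(z²) > 0 then ∫₀^b |f(x)|² dx ≤ Im m(0)/Im(z²), with a bound independent of b. -/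
open Set intervalIntegral MeasureTheory

/-- If `m` is `C¹` on `[0, b]` with `Im m > 0` and satisfies the
Riccati equation `m′ = −z² − q + m²` (with `Im z² ≠ 0` and `q` real continuous),
then `f(x) = exp(−∫₀ˣ m)` satisfies
`∫₀^b |f|² = (Im m(0)/Im z²)(1 − exp(−∫₀^b Im z²/Im m))`; in particular if
`Im z² > 0` then `∫₀^b |f|² ≤ Im m(0)/Im z²`. -/
theorem stmt_11 (b : ℝ) (hb : 0 < b) (z : ℂ) (hz : (z ^ 2).im ≠ 0)
    (q : ℝ → ℝ) (hq : ContinuousOn q (Set.Icc 0 b))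
    (m m' : ℝ → ℂ)
    (hm' : ∀ x ∈ Set.Icc (0 : ℝ) b, HasDerivWithinAt m (m' x) (Set.Icc 0 b) x)
    (hm'c : ContinuousOn m' (Set.Icc 0 b))
    (hmim : ∀ x ∈ Set.Icc (0 : ℝ) b, 0 < (m x).im)
    (hric : ∀ x ∈ Set.Icc (0 : ℝ) b, m' x = -z ^ 2 - (q x : ℂ) + m x ^ 2)
    (f : ℝ → ℂ) (hf : ∀ x, f x = Complex.exp (-∫ y in (0 : ℝ)..x, m y)) :
    (∫ x in (0 : ℝ)..b, ‖f x‖ ^ 2) =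
      ((m 0).im / (z ^ 2).im) *
        (1 - Real.exp (-∫ y in (0 : ℝ)..b, (z ^ 2).im / (m y).im)) ∧
    (0 < (z ^ 2).im →
      (∫ x in (0 : ℝ)..b, ‖f x‖ ^ 2) ≤ (m 0).im / (z ^ 2).im) := by
  set A : ℝ := (z ^ 2).im with hA
  -- continuity of m
  have hmc : ContinuousOn m (Icc 0 b) := fun x hx => (hm' x hx).continuousWithinAt
  have hgc : ContinuousOn (fun x => (m x).im) (Icc 0 b) :=
    Complex.continuous_im.comp_continuousOn hmc
  have hRc : ContinuousOn (fun x => (m x).re) (Icc 0 b) :=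
    Complex.continuous_re.comp_continuousOn hmc
  have hgne : ∀ x ∈ Icc (0 : ℝ) b, (m x).im ≠ 0 := fun x hx => (hmim x hx).ne'
  have hAgc : ContinuousOn (fun x => A / (m x).im) (Icc 0 b) :=
    (continuousOn_const.div hgc hgne)
  -- integrability helpers on subintervals
  have hsub : ∀ x ∈ Icc (0 : ℝ) b, Icc (0 : ℝ) x ⊆ Icc 0 b := fun x hx =>
    Icc_subset_Icc le_rfl hx.2
  have husub : ∀ x ∈ Icc (0 : ℝ) b, uIcc (0 : ℝ) x ⊆ Icc 0 b := by
    intro x hx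
    rw [uIcc_of_le hx.1]
    exact hsub x hx
  have hmint : ∀ x ∈ Icc (0 : ℝ) b, IntervalIntegrable m volume 0 x := fun x hx =>
    (hmc.mono (husub x hx)).intervalIntegrable
  have hRint : ∀ x ∈ Icc (0 : ℝ) b, IntervalIntegrable (fun y => (m y).re) volume 0 x :=
    fun x hx => (hRc.mono (husub x hx)).intervalIntegrable
  have hAgint : ∀ x ∈ Icc (0 : ℝ) b, IntervalIntegrable (fun y => A / (m y).im) volume 0 x :=
    fun x hx => (hAgc.mono (husub x hx)).intervalIntegrable
  have hbmem : b ∈ Icc (0 : ℝ) b := ⟨hb.le, le_rfl⟩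
  -- membership of Icc 0 b in right-neighborhood filters
  have hIcc_mem : ∀ x ∈ Ico (0 : ℝ) b, ∀ (t : Set ℝ), Ioi x ⊆ t →
      Icc (0 : ℝ) b ∈ nhdsWithin x t → True := fun _ _ _ _ _ => trivial
  have hmemIci : ∀ x ∈ Ico (0 : ℝ) b, Icc (0 : ℝ) b ∈ nhdsWithin x (Ici x) := by
    intro x hx
    refine mem_nhdsWithin.2 ⟨Iio b, isOpen_Iio, hx.2, ?_⟩
    intro y hy
    exact ⟨le_trans hx.1 hy.2, le_of_lt hy.1⟩
  have hmemIoi : ∀ x ∈ Ico (0 : ℝ) b, Icc (0 : ℝ) b ∈ nhdsWithin x (Ioi x) := by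
    intro x hx
    exact nhdsWithin_mono x Ioi_subset_Ici_self (hmemIci x hx)
  -- |f x|^2 = exp (-2 ∫ Re m)
  set φ : ℝ → ℝ := fun x => Real.exp (-(2 * ∫ y in (0:ℝ)..x, (m y).re)) with hφ
  have habs : ∀ x ∈ Icc (0 : ℝ) b, ‖f x‖ ^ 2 = φ x := by
    intro x hx
    have hre : (∫ y in (0:ℝ)..x, (m y).re) = (∫ y in (0:ℝ)..x, m y).re := by
      have := Complex.reCLM.intervalIntegral_comp_comm (hmint x hx)
      simpa using this
    rw [hf x, Complex.norm_exp, hφ, ← Real.exp_nat_mul]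
    simp only [Complex.neg_re, ← hre]
    ring_nf
  -- FTC-1: right derivatives of the primitives, for x ∈ [0, b)
  have hIRd : ∀ x ∈ Ico (0 : ℝ) b,
      HasDerivWithinAt (fun u => ∫ y in (0:ℝ)..u, (m y).re) ((m x).re) (Ici x) x := by
    intro x hx
    have hx' : x ∈ Icc (0:ℝ) b := ⟨hx.1, hx.2.le⟩
    exact intervalIntegral.integral_hasDerivWithinAt_right (hRint x hx')
      ⟨Icc 0 b, hmemIoi x hx, hRc.aestronglyMeasurable measurableSet_Icc⟩
      (((hRc x hx').mono_of_mem_nhdsWithin (hmemIoi x hx)))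
  have hJd : ∀ x ∈ Ico (0 : ℝ) b,
      HasDerivWithinAt (fun u => ∫ y in (0:ℝ)..u, A / (m y).im) (A / (m x).im) (Ici x) x := by
    intro x hx
    have hx' : x ∈ Icc (0:ℝ) b := ⟨hx.1, hx.2.le⟩
    exact intervalIntegral.integral_hasDerivWithinAt_right (hAgint x hx')
      ⟨Icc 0 b, hmemIoi x hx, hAgc.aestronglyMeasurable measurableSet_Icc⟩
      (((hAgc x hx').mono_of_mem_nhdsWithin (hmemIoi x hx)))
  -- derivative of Im m
  have hgd : ∀ x ∈ Ico (0 : ℝ) b,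
      HasDerivWithinAt (fun y => (m y).im) (-A + 2 * (m x).re * (m x).im) (Ici x) x := by
    intro x hx
    have hx' : x ∈ Icc (0:ℝ) b := ⟨hx.1, hx.2.le⟩
    have h1 : HasDerivWithinAt (fun y => (m y).im) ((m' x).im) (Ici x) x :=
      (Complex.imCLM.hasFDerivAt.comp_hasDerivWithinAt x
        ((hm' x hx').mono_of_mem_nhdsWithin (hmemIci x hx)))
    have h2 : (m' x).im = -A + 2 * (m x).re * (m x).im := by
      rw [hric x hx']
      simp [pow_two, Complex.mul_im, Complex.sub_im, Complex.add_im, hA]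
      ring
    rwa [h2] at h1
  -- continuity of the primitives on [0, b]
  have hIRc : ContinuousOn (fun u => ∫ y in (0:ℝ)..u, (m y).re) (Icc 0 b) := by
    have := intervalIntegral.continuousOn_primitive_interval
      (μ := volume) (a := (0:ℝ)) (b := b)
      (f := fun y => (m y).re) ((hRc.mono (by rw [uIcc_of_le hb.le])).integrableOn_compact
        (by rw [uIcc_of_le hb.le]; exact isCompact_Icc))
    rwa [uIcc_of_le hb.le] at this
  have hJc : ContinuousOn (fun u => ∫ y in (0:ℝ)..u, A / (m y).im) (Icc 0 b) := by
    have := intervalIntegral.continuousOn_primitive_interval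
      (μ := volume) (a := (0:ℝ)) (b := b)
      (f := fun y => A / (m y).im) ((hAgc.mono (by rw [uIcc_of_le hb.le])).integrableOn_compact
        (by rw [uIcc_of_le hb.le]; exact isCompact_Icc))
    rwa [uIcc_of_le hb.le] at this
  have hφc : ContinuousOn φ (Icc 0 b) :=
    Real.continuous_exp.comp_continuousOn ((continuousOn_const.mul hIRc).neg)
  -- the conserved quantity G
  set G : ℝ → ℝ := fun x => (m x).im * (φ x * Real.exp (∫ y in (0:ℝ)..x, A / (m y).im))
    with hG
  have hGc : ContinuousOn G (Icc 0 b) :=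
    hgc.mul (hφc.mul (Real.continuous_exp.comp_continuousOn hJc))
  have hGd : ∀ x ∈ Ico (0 : ℝ) b, HasDerivWithinAt G 0 (Ici x) x := by
    intro x hx
    have hx' : x ∈ Icc (0:ℝ) b := ⟨hx.1, hx.2.le⟩
    have hφd : HasDerivWithinAt φ (φ x * (-(2 * (m x).re))) (Ici x) x := by
      have : HasDerivWithinAt (fun u => -(2 * ∫ y in (0:ℝ)..u, (m y).re))
          (-(2 * (m x).re)) (Ici x) x := (((hIRd x hx).const_mul 2).neg)
      simpa [hφ] using this.exp
    have hEd : HasDerivWithinAt (fun u => Real.exp (∫ y in (0:ℝ)..u, A / (m y).im))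
        (Real.exp (∫ y in (0:ℝ)..x, A / (m y).im) * (A / (m x).im)) (Ici x) x :=
      (hJd x hx).exp
    have hprod := (hgd x hx).mul (hφd.mul hEd)
    have key : (-A + 2 * (m x).re * (m x).im) * (φ x * Real.exp (∫ y in (0:ℝ)..x, A / (m y).im))
        + (m x).im * (φ x * (-(2 * (m x).re)) * Real.exp (∫ y in (0:ℝ)..x, A / (m y).im)
          + φ x * (Real.exp (∫ y in (0:ℝ)..x, A / (m y).im) * (A / (m x).im))) = 0 := by
      field_simp [hgne x hx']
      ring
    simp only [Pi.mul_apply] at hprod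
    rw [key] at hprod
    exact hprod
  have hGconst : ∀ x ∈ Icc (0 : ℝ) b, G x = (m 0).im := by
    have := constant_of_has_deriv_right_zero hGc hGd
    intro x hx
    have h0 : G 0 = (m 0).im := by simp [hG, hφ]
    rw [this x hx, h0]
  -- φ in terms of the explicit formula
  have hφeq : ∀ x ∈ Icc (0 : ℝ) b,
      φ x = (m 0).im / (m x).im * Real.exp (-(∫ y in (0:ℝ)..x, A / (m y).im)) := by
    intro x hx
    have hGx := hGconst x hx
    rw [hG] at hGx
    have hE := Real.exp_pos (∫ y in (0:ℝ)..x, A / (m y).im)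
    field_simp [Real.exp_neg, hgne x hx] at hGx ⊢
    rw [← hGx, mul_assoc ((m x).im * φ x), ← Real.exp_add]; simp
  -- antiderivative F
  set F : ℝ → ℝ := fun x => (m 0).im / A *
      (1 - Real.exp (-(∫ y in (0:ℝ)..x, A / (m y).im))) with hF
  have hFc : ContinuousOn F (Icc 0 b) :=
    continuousOn_const.mul (continuousOn_const.sub
      (Real.continuous_exp.comp_continuousOn hJc.neg))
  have hFd : ∀ x ∈ Ico (0 : ℝ) b, HasDerivWithinAt F (φ x) (Ici x) x := by
    intro x hx
    have hx' : x ∈ Icc (0:ℝ) b := ⟨hx.1, hx.2.le⟩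
    have h1 : HasDerivWithinAt (fun u => Real.exp (-(∫ y in (0:ℝ)..u, A / (m y).im)))
        (Real.exp (-(∫ y in (0:ℝ)..x, A / (m y).im)) * (-(A / (m x).im))) (Ici x) x :=
      ((hJd x hx).neg).exp
    have h2 := ((h1.const_sub 1).const_mul ((m 0).im / A))
    have h3 : (m 0).im / A *
        -(Real.exp (-(∫ y in (0:ℝ)..x, A / (m y).im)) * -(A / (m x).im)) = φ x := by
      rw [hφeq x hx']
      field_simp [hgne x hx', hz]
    rw [hF]
    exact h3 ▸ h2
  -- FTC-2
  have hFTC : (∫ x in (0:ℝ)..b, φ x) = F b - F 0 := by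
    refine integral_eq_sub_of_hasDeriv_right_of_le hb.le hFc (fun x hx => ?_) ?_
    · exact (hFd x ⟨hx.1.le, hx.2⟩).mono Ioi_subset_Ici_self
    · exact (hφc.mono (by rw [uIcc_of_le hb.le])).intervalIntegrable
  have hF0 : F 0 = 0 := by simp [hF]
  have hmain : (∫ x in (0:ℝ)..b, ‖f x‖ ^ 2) =
      ((m 0).im / A) * (1 - Real.exp (-(∫ y in (0:ℝ)..b, A / (m y).im))) := by
    rw [intervalIntegral.integral_congr (g := φ)
      (fun x hx => habs x (by rwa [uIcc_of_le hb.le] at hx)), hFTC, hF0, hF]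
    ring
  constructor
  · exact hmain
  · intro hApos
    rw [hmain]
    have hm0 : 0 < (m 0).im := hmim 0 ⟨le_rfl, hb.le⟩
    have h1 : 0 < (m 0).im / A := div_pos hm0 hApos
    nlinarith [Real.exp_pos (-(∫ y in (0:ℝ)..b, A / (m y).im))]
end

section
/- Let n ≥ 1 be an integer and let ω : ℝ → (0, ∞) be a C¹ even function with bounded derivative such that ω is non-increasing on [0, ∞) and ω(y) = |y|^{−(n−1)} for |y| ≥ 1. Let C = {±ω(y) + iy : y ∈ ℝ} and, for σ > 1, let C′ = σC = {σζ : ζ ∈ C}. Then there exists c > 0 such that for every z ∈ C′, ∫_C |λ − z|^{−2} dℓ(λ) ≤ c·(1 + |z|)^{n−1}, where the integral is with respect to arclength on C. -/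
open MeasureTheory Real

lemma aux_integrable (d a : ℝ) (hd : 0 < d) :
    Integrable (fun t : ℝ => (d ^ 2 + (t - a) ^ 2)⁻¹) := by
  have h : (fun t : ℝ => (d ^ 2 + (t - a) ^ 2)⁻¹)
      = fun t : ℝ => d⁻¹ * d⁻¹ * (1 + ((t - a) / d) ^ 2)⁻¹ := by
    funext t
    field_simp
  rw [h]
  exact (((integrable_inv_one_add_sq).comp_div hd.ne').comp_sub_right a).const_mul _

lemma aux_integral (d a : ℝ) (hd : 0 < d) :
    (∫ t : ℝ, (d ^ 2 + (t - a) ^ 2)⁻¹) = π / d := by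
  have h : (fun t : ℝ => (d ^ 2 + (t - a) ^ 2)⁻¹)
      = fun t : ℝ => d⁻¹ * d⁻¹ * (1 + ((t - a) / d) ^ 2)⁻¹ := by
    funext t
    field_simp
  rw [h]
  rw [MeasureTheory.integral_const_mul]
  rw [show (fun t : ℝ => (1 + ((t - a) / d) ^ 2)⁻¹)
      = ((fun x : ℝ => (1 + (x / d) ^ 2)⁻¹) <| · - a) from rfl]
  rw [integral_sub_right_eq_self (fun x : ℝ => (1 + (x / d) ^ 2)⁻¹) a]
  rw [MeasureTheory.Measure.integral_comp_div (fun x : ℝ => (1 + x ^ 2)⁻¹) d]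
  rw [integral_univ_inv_one_add_sq]
  rw [abs_of_pos hd, smul_eq_mul]
  field_simp

set_option maxHeartbeats 1000000 in
/-- For the curve `C = {±ω(y) + iy}` with `ω` positive, even, `C¹`
with bounded derivative, non-increasing on `[0, ∞)` and `ω(y) = |y|^{−(n−1)}` for
`|y| ≥ 1`, and the dilated curve `C′ = σC` (`σ > 1`), there is `c > 0` with
`∫_C |λ − z|^{−2} dℓ(λ) ≤ c(1 + |z|)^{n−1}` for every `z ∈ C′`. -/
theorem stmt_12 (n : ℕ) (hn : 1 ≤ n) (ω : ℝ → ℝ)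
    (hωpos : ∀ y, 0 < ω y) (hωC1 : ContDiff ℝ 1 ω)
    (hωeven : ∀ y, ω (-y) = ω y)
    (hωder : ∃ Bd : ℝ, ∀ y, |deriv ω y| ≤ Bd)
    (hωmono : AntitoneOn ω (Set.Ici 0))
    (hωeq : ∀ y : ℝ, 1 ≤ |y| → ω y = |y| ^ (-((n : ℤ) - 1)))
    (σ : ℝ) (hσ : 1 < σ) :
    ∃ c : ℝ, 0 < c ∧ ∀ z : ℂ,
      (∃ ζ : ℂ, |ζ.re| = ω ζ.im ∧ z = (σ : ℂ) * ζ) →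
      (∑ s ∈ ({1, -1} : Finset ℝ),
          ∫⁻ t : ℝ, ENNReal.ofReal
            ((‖(↑(s * ω t) + (t : ℂ) * Complex.I) - z‖ ^ 2)⁻¹ *
              Real.sqrt (1 + deriv ω t ^ 2)))
        ≤ ENNReal.ofReal (c * (1 + ‖z‖) ^ (n - 1)) := by
  obtain ⟨Bd, hBd⟩ := hωder
  have hBd0 : 0 ≤ Bd := (abs_nonneg _).trans (hBd 0)
  set K := Real.sqrt (1 + Bd ^ 2) with hKdef
  have hK1 : 1 ≤ K := by
    have h := Real.sqrt_le_sqrt (show (1:ℝ) ≤ 1 + Bd ^ 2 by nlinarith)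
    rw [Real.sqrt_one] at h
    exact h
  have hKpos : 0 < K := lt_of_lt_of_le one_pos hK1
  have hσ0 : 0 < σ := by linarith
  -- evenness/monotonicity helpers
  have hωabs : ∀ y : ℝ, ω y = ω |y| := by
    intro y
    rcases abs_choice y with h | h
    · rw [h]
    · rw [h, hωeven]
  have hmono' : ∀ a b : ℝ, |a| ≤ |b| → ω b ≤ ω a := by
    intro a b hab
    rw [hωabs a, hωabs b]
    exact hωmono (abs_nonneg a) (le_trans (abs_nonneg a) hab) hab
  -- choice of η with σ ω(η) > ω(0)
  have hω0 : 0 < ω 0 := hωpos 0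
  have hcont : ContinuousAt ω 0 := hωC1.continuous.continuousAt
  rw [Metric.continuousAt_iff] at hcont
  obtain ⟨η', hη'pos, hball⟩ := hcont ((σ - 1) / σ * ω 0)
    (by have : 0 < σ - 1 := by linarith
        positivity)
  set η := η' / 2 with hηdef
  have hηpos : 0 < η := by positivity
  have hgap : ω 0 < σ * ω η := by
    have h1 : |ω η - ω 0| < (σ - 1) / σ * ω 0 := by
      apply hball
      rw [Real.dist_eq, sub_zero, abs_of_pos hηpos, hηdef]
      linarith
    have h2 : ω 0 - (σ - 1) / σ * ω 0 < ω η := by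
      rcases abs_lt.mp h1 with ⟨ha, _⟩; linarith
    have key : σ * ((σ - 1) / σ * ω 0) = (σ - 1) * ω 0 := by field_simp
    nlinarith [mul_lt_mul_of_pos_left h2 hσ0]
  -- the constant δ
  set δ := min (min 1 (σ - 1)) (min ((σ - 1) * η) (σ * ω η - ω 0)) with hδdef
  have hδpos : 0 < δ :=
    lt_min (lt_min one_pos (by linarith))
      (lt_min (by nlinarith) (by linarith))
  have hδ1 : δ ≤ 1 := le_trans (min_le_left _ _) (min_le_left _ _)
  have hδσ : δ ≤ σ - 1 := le_trans (min_le_left _ _) (min_le_right _ _)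
  have hδη : δ ≤ (σ - 1) * η := le_trans (min_le_right _ _) (min_le_left _ _)
  have hδg : δ ≤ σ * ω η - ω 0 := le_trans (min_le_right _ _) (min_le_right _ _)
  refine ⟨4 * π * K / δ, div_pos (by nlinarith [Real.pi_pos]) hδpos, ?_⟩
  rintro z ⟨ζ, hζ, rfl⟩
  set x₀ := ζ.re with hx₀def
  set y₀ := ζ.im with hy₀def
  have hx : |x₀| = ω y₀ := hζ
  set R := ‖(σ : ℂ) * ζ‖ with hRdef
  set P := (1 + R) ^ (n - 1) with hPdef
  have hR0 : 0 ≤ R := norm_nonneg _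
  have hP1 : 1 ≤ P := by
    calc (1:ℝ) = 1 ^ (n - 1) := (one_pow _).symm
      _ ≤ (1 + R) ^ (n - 1) := pow_le_pow_left₀ one_pos.le (by linarith) _
  have hPpos : 0 < P := lt_of_lt_of_le one_pos hP1
  have hzre : ((σ : ℂ) * ζ).re = σ * x₀ := by simp [Complex.mul_re, hx₀def]
  have hzim : ((σ : ℂ) * ζ).im = σ * y₀ := by simp [Complex.mul_im, hy₀def]
  have hy₀R : |y₀| ≤ 1 + R := by
    have h1 : |y₀| ≤ ‖ζ‖ := Complex.abs_im_le_norm ζ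
    have h2 : R = σ * ‖ζ‖ := by
      rw [hRdef, norm_mul, Complex.norm_real, Real.norm_eq_abs, abs_of_pos hσ0]
    nlinarith [norm_nonneg ζ]
  have hL1 : 1 ≤ ω y₀ * P := by
    rcases le_or_gt |y₀| 1 with h | h
    · have h1 : ω 1 ≤ ω y₀ := hmono' y₀ 1 (by simpa using h)
      have h2 : ω 1 = 1 := by
        have := hωeq 1 (by norm_num)
        simpa using this
      nlinarith [hωpos y₀]
    · have hy1 : (1 : ℝ) ≤ |y₀| := h.le
      have hω : ω y₀ = (|y₀| ^ (n - 1))⁻¹ := by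
        rw [hωeq y₀ hy1, show -((n : ℤ) - 1) = -((n - 1 : ℕ) : ℤ) by push_cast; omega,
          zpow_neg, zpow_natCast]
      have h3 : |y₀| ^ (n - 1) ≤ P := pow_le_pow_left₀ (abs_nonneg _) hy₀R _
      have hpos : 0 < |y₀| ^ (n - 1) := pow_pos (by linarith) _
      rw [hω, inv_mul_eq_div, le_div_iff₀ hpos, one_mul]
      exact h3
  set d := δ / P with hddef
  have hdpos : 0 < d := by positivity
  have hdδ : d ≤ δ := div_le_self hδpos.le hP1
  have hdω : d ≤ ω y₀ := by
    show δ / P ≤ ω y₀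
    rw [div_le_iff₀ hPpos]
    exact le_trans hδ1 hL1
  -- the "matching branch" distance estimate
  have hmatch : ∀ t : ℝ, d ≤ |ω t - σ * ω y₀| ∨ d ≤ |t - σ * y₀| := by
    intro t
    rcases le_or_gt |y₀| |t| with hty | hty
    · left
      have h1 : ω t ≤ ω y₀ := hmono' y₀ t hty
      have h2 : d ≤ (σ - 1) * ω y₀ := by
        show δ / P ≤ (σ - 1) * ω y₀
        rw [div_le_iff₀ hPpos]
        have hh : (0:ℝ) ≤ (σ - 1) * (ω y₀ * P - 1) :=
          mul_nonneg (by linarith) (by linarith)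
        nlinarith
      have h3 : σ * ω y₀ - ω t ≤ |ω t - σ * ω y₀| := by
        calc σ * ω y₀ - ω t = -(ω t - σ * ω y₀) := by ring
          _ ≤ |ω t - σ * ω y₀| := neg_le_abs _
      linarith
    · rcases le_or_gt η |y₀| with hηy | hηy
      · right
        have h1 : |σ * y₀| - |t| ≤ |σ * y₀ - t| := abs_sub_abs_le_abs_sub _ _
        have h2 : |σ * y₀ - t| = |t - σ * y₀| := abs_sub_comm _ _
        have h3 : |σ * y₀| = σ * |y₀| := by rw [abs_mul, abs_of_pos hσ0]
        have h4 : (σ - 1) * η ≤ (σ - 1) * |y₀| := by nlinarith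
        linarith
      · left
        have h1 : ω η ≤ ω y₀ := hmono' y₀ η (by rw [abs_of_pos hηpos]; exact hηy.le)
        have h2 : ω t ≤ ω 0 := hmono' 0 t (by simp)
        have h3 : σ * ω η ≤ σ * ω y₀ := by nlinarith
        have h4 : σ * ω y₀ - ω t ≤ |ω t - σ * ω y₀| := by
          calc σ * ω y₀ - ω t = -(ω t - σ * ω y₀) := by ring
            _ ≤ |ω t - σ * ω y₀| := neg_le_abs _
        linarith
  -- the full distance estimate
  have hdist : ∀ s : ℝ, (s = 1 ∨ s = -1) → ∀ t : ℝ,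
      d ^ 2 ≤ (s * ω t - σ * x₀) ^ 2 + (t - σ * y₀) ^ 2 := by
    intro s hs t
    have hwt := hωpos t
    have hwy := hωpos y₀
    have key : d ≤ |s * ω t - σ * x₀| ∨ d ≤ |t - σ * y₀| := by
      rcases (abs_eq hwy.le).mp hx with hx' | hx' <;> rcases hs with hs' | hs'
      · -- s = 1, x₀ = ω y₀ : matching branch
        have h : |s * ω t - σ * x₀| = |ω t - σ * ω y₀| := by rw [hs', hx', one_mul]
        rw [h]; exact hmatch t
      · -- s = -1, x₀ = ω y₀ : opposite branch
        left
        apply le_abs.mpr (Or.inr _)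
        rw [hs', hx']
        nlinarith
      · -- s = 1, x₀ = -ω y₀ : opposite branch
        left
        apply le_abs.mpr (Or.inl _)
        rw [hs', hx']
        nlinarith
      · -- s = -1, x₀ = -ω y₀ : matching branch
        have h : |s * ω t - σ * x₀| = |ω t - σ * ω y₀| := by
          rw [hs', hx']
          rw [show -1 * ω t - σ * -ω y₀ = -(ω t - σ * ω y₀) by ring, abs_neg]
        rw [h]; exact hmatch t
    rcases key with h | h
    · nlinarith [sq_nonneg (t - σ * y₀), sq_abs (s * ω t - σ * x₀),
        pow_le_pow_left₀ hdpos.le h 2]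
    · nlinarith [sq_nonneg (s * ω t - σ * x₀), sq_abs (t - σ * y₀),
        pow_le_pow_left₀ hdpos.le h 2]
  -- squared modulus identity
  have habs : ∀ s t : ℝ,
      ‖(↑(s * ω t) + (t : ℂ) * Complex.I) - (σ : ℂ) * ζ‖ ^ 2
        = (s * ω t - σ * x₀) ^ 2 + (t - σ * y₀) ^ 2 := by
    intro s t
    rw [Complex.sq_norm, Complex.normSq_apply]
    simp [Complex.mul_re, Complex.mul_im]
    ring
  -- pointwise bound on the integrand
  have hpt : ∀ s : ℝ, (s = 1 ∨ s = -1) → ∀ t : ℝ,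
      (‖(↑(s * ω t) + (t : ℂ) * Complex.I) - (σ : ℂ) * ζ‖ ^ 2)⁻¹ *
          Real.sqrt (1 + deriv ω t ^ 2)
        ≤ 2 * K * (d ^ 2 + (t - σ * y₀) ^ 2)⁻¹ := by
    intro s hs t
    rw [habs s t]
    have h1 : d ^ 2 ≤ (s * ω t - σ * x₀) ^ 2 + (t - σ * y₀) ^ 2 := hdist s hs t
    have hsqrt : Real.sqrt (1 + deriv ω t ^ 2) ≤ K := by
      rw [hKdef]
      apply Real.sqrt_le_sqrt
      nlinarith [hBd t, abs_nonneg (deriv ω t), sq_abs (deriv ω t)]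
    have hdB : (0:ℝ) < d ^ 2 + (t - σ * y₀) ^ 2 := by positivity
    have hhalf : (d ^ 2 + (t - σ * y₀) ^ 2) / 2 ≤
        (s * ω t - σ * x₀) ^ 2 + (t - σ * y₀) ^ 2 := by nlinarith [sq_nonneg (t - σ * y₀)]
    have hinv : ((s * ω t - σ * x₀) ^ 2 + (t - σ * y₀) ^ 2)⁻¹ ≤
        2 * (d ^ 2 + (t - σ * y₀) ^ 2)⁻¹ := by
      calc ((s * ω t - σ * x₀) ^ 2 + (t - σ * y₀) ^ 2)⁻¹
          ≤ ((d ^ 2 + (t - σ * y₀) ^ 2) / 2)⁻¹ :=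
            inv_anti₀ (by positivity) hhalf
        _ = 2 * (d ^ 2 + (t - σ * y₀) ^ 2)⁻¹ := by
            rw [inv_div, div_eq_mul_inv]
    calc ((s * ω t - σ * x₀) ^ 2 + (t - σ * y₀) ^ 2)⁻¹ * Real.sqrt (1 + deriv ω t ^ 2)
        ≤ (2 * (d ^ 2 + (t - σ * y₀) ^ 2)⁻¹) * K := by
          apply mul_le_mul hinv hsqrt (Real.sqrt_nonneg _)
          positivity
      _ = 2 * K * (d ^ 2 + (t - σ * y₀) ^ 2)⁻¹ := by ring
  -- bound on each branch integral
  have hbound : ∀ s : ℝ, (s = 1 ∨ s = -1) →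
      (∫⁻ t : ℝ, ENNReal.ofReal
          ((‖(↑(s * ω t) + (t : ℂ) * Complex.I) - (σ : ℂ) * ζ‖ ^ 2)⁻¹ *
            Real.sqrt (1 + deriv ω t ^ 2)))
        ≤ ENNReal.ofReal (2 * K * (π / d)) := by
    intro s hs
    have hint : Integrable (fun t : ℝ => 2 * K * (d ^ 2 + (t - σ * y₀) ^ 2)⁻¹) :=
      (aux_integrable d (σ * y₀) hdpos).const_mul _
    calc (∫⁻ t : ℝ, ENNReal.ofReal
            ((‖(↑(s * ω t) + (t : ℂ) * Complex.I) - (σ : ℂ) * ζ‖ ^ 2)⁻¹ *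
              Real.sqrt (1 + deriv ω t ^ 2)))
        ≤ ∫⁻ t : ℝ, ENNReal.ofReal (2 * K * (d ^ 2 + (t - σ * y₀) ^ 2)⁻¹) :=
          lintegral_mono fun t => ENNReal.ofReal_le_ofReal (hpt s hs t)
      _ = ENNReal.ofReal (∫ t : ℝ, 2 * K * (d ^ 2 + (t - σ * y₀) ^ 2)⁻¹) :=
          (ofReal_integral_eq_lintegral_ofReal hint (ae_of_all _ fun t =>
            mul_nonneg (by positivity) (inv_nonneg.mpr (by positivity)))).symm
      _ = ENNReal.ofReal (2 * K * (π / d)) := by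
          rw [MeasureTheory.integral_const_mul, aux_integral d (σ * y₀) hdpos]
  have hnn : (0:ℝ) ≤ 2 * K * (π / d) :=
    mul_nonneg (by positivity) (div_nonneg Real.pi_pos.le hdpos.le)
  rw [Finset.sum_pair (show (1:ℝ) ≠ -1 by norm_num)]
  calc (∫⁻ t : ℝ, ENNReal.ofReal
          ((‖(↑((1:ℝ) * ω t) + (t : ℂ) * Complex.I) - (σ : ℂ) * ζ‖ ^ 2)⁻¹ *
            Real.sqrt (1 + deriv ω t ^ 2))) +
        (∫⁻ t : ℝ, ENNReal.ofReal
          ((‖(↑((-1:ℝ) * ω t) + (t : ℂ) * Complex.I) - (σ : ℂ) * ζ‖ ^ 2)⁻¹ *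
            Real.sqrt (1 + deriv ω t ^ 2)))
      ≤ ENNReal.ofReal (2 * K * (π / d)) + ENNReal.ofReal (2 * K * (π / d)) :=
        add_le_add (hbound 1 (Or.inl rfl)) (hbound (-1) (Or.inr rfl))
    _ = ENNReal.ofReal (2 * K * (π / d) + 2 * K * (π / d)) :=
        (ENNReal.ofReal_add hnn hnn).symm
    _ = ENNReal.ofReal (4 * π * K / δ * P) := by
        congr 1
        rw [hddef]
        field_simp
        ring
end
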